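/- arXiv:1212.3231 — 4 statements merged into one kernel-verified Lean document; each statement's English description precedes it below -/
import Mathlib

section
/- Let Z be a bounded random variable on a finite probability space with E(Z)=m, and let F_0 = {emptyset, Omega} ⊆ F_1 ⊆ ... ⊆ F_t be a filtration such that Z is F_t-measurable. Define Z_i = E(Z | F_i), and for each i let ran_i be the conditional range of Z_i given F_{i-1}, i.e. the F_{i-1}-measurable function whose value at ω is the maximum of |Z_i(ω_1) - Z_i(ω_2)| over ω_1, ω_2 in the atom of F_{i-1} containing ω. Let R_t^2 = Σ_{i=1}^t ran_i^2. Then for any a ≥ 0 and any value r² ≥ 0, P(|Z - m| ≥ a and R_t^2 ≤ r²) ≤ 2 exp(-2a²/r²). -/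
open MeasureTheory Real

/-- The atom of `ω` in the σ-field `G`: the set of points contained in every
`G`-measurable set containing `ω`. -/
def atomOf {Ω : Type*} (G : MeasurableSpace Ω) (ω : Ω) : Set Ω :=
  {ω' | ∀ A : Set Ω, MeasurableSet[G] A → ω ∈ A → ω' ∈ A}

/-- The conditional range of `Y` given `G`: the maximum of `|Y ω₁ - Y ω₂|` over
points `ω₁, ω₂` in the `G`-atom containing `ω`. -/
noncomputable def condRange {Ω : Type*} (G : MeasurableSpace Ω) (Y : Ω → ℝ) (ω : Ω) : ℝ :=
  sSup {r | ∃ ω₁ ∈ atomOf G ω, ∃ ω₂ ∈ atomOf G ω, r = |Y ω₁ - Y ω₂|}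

/-!
Exponential supermartingale argument. On an atom of `ℱ k` the increment `M (k + 1) - M k`
has mean zero and ranges over an interval of length `condRange (ℱ k) (M (k + 1))`, so Hoeffding's
lemma for the measure conditioned on the atom bounds its conditional moment generating function
by `exp (h ^ 2 * condRange ^ 2 / 8)`. Hence `exp (h * (M k - M 0) - h ^ 2 / 8 * R_k²)` has
expectation at most `1`, and Markov's inequality with `h = 4 a / r²` on the event
`{a ≤ M t - M 0, R_t² ≤ r²}` gives `exp (-2 a² / r²)`; applying this to `-M` as well gives the
two-sided bound.
-/

open ProbabilityTheory

section Atoms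

variable {Ω : Type*} {G : MeasurableSpace Ω}

lemma atomOf_eq_measurableAtom (ω : Ω) : atomOf G ω = @measurableAtom Ω G ω := by
  ext ω'
  simp only [atomOf, measurableAtom, Set.mem_ofPred_eq, Set.mem_iInter]
  exact ⟨fun h A hωA hA => h A hA hωA, fun h A hA hωA => h A hωA hA⟩

lemma mem_atomOf_self (ω : Ω) : ω ∈ atomOf G ω := by
  rw [atomOf_eq_measurableAtom]
  exact @mem_measurableAtom_self Ω G ω

lemma atomOf_eq_of_mem {ω ω' : Ω} (h : ω' ∈ atomOf G ω) : atomOf G ω' = atomOf G ω := by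
  simp only [atomOf_eq_measurableAtom] at h ⊢
  exact @measurableAtom_eq_of_mem Ω G ω' ω h

lemma measurableSet_atomOf [Countable Ω] (ω : Ω) : MeasurableSet[G] (atomOf G ω) := by
  rw [atomOf_eq_measurableAtom]
  exact @MeasurableSet.measurableAtom_of_countable Ω G _ ω

lemma Measurable.eq_of_mem_atomOf {β : Type*} [MeasurableSpace β] [MeasurableSingletonClass β]
    {f : Ω → β} (hf : Measurable[G] f) {ω ω' : Ω} (h : ω' ∈ atomOf G ω) : f ω' = f ω :=
  h _ (hf (measurableSet_singleton (f ω))) rfl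

lemma measurable_of_eq_of_mem_atomOf [Countable Ω] {β : Type*} [MeasurableSpace β] {f : Ω → β}
    (hf : ∀ ω ω', ω' ∈ atomOf G ω → f ω' = f ω) : Measurable[G] f := by
  intro s _
  have hunion : f ⁻¹' s = ⋃ ω ∈ f ⁻¹' s, atomOf G ω := by
    refine subset_antisymm (fun ω hω => Set.mem_biUnion hω (mem_atomOf_self ω)) ?_
    simp only [Set.iUnion_subset_iff]
    intro ω hω ω' hω'
    rwa [Set.mem_preimage, hf ω ω' hω']
  rw [hunion]
  exact MeasurableSet.biUnion (Set.to_countable _) fun ω _ => measurableSet_atomOf ω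

lemma abs_sub_le_condRange [Finite Ω] (Y : Ω → ℝ) {ω ω₁ ω₂ : Ω} (h₁ : ω₁ ∈ atomOf G ω)
    (h₂ : ω₂ ∈ atomOf G ω) : |Y ω₁ - Y ω₂| ≤ condRange G Y ω := by
  refine le_csSup ?_ ⟨ω₁, h₁, ω₂, h₂, rfl⟩
  refine ((Set.finite_range fun p : Ω × Ω => |Y p.1 - Y p.2|).subset ?_).bddAbove
  rintro r ⟨ω₁, -, ω₂, -, rfl⟩
  exact ⟨(ω₁, ω₂), rfl⟩

lemma measurable_condRange [Countable Ω] (Y : Ω → ℝ) : Measurable[G] (condRange G Y) :=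
  measurable_of_eq_of_mem_atomOf fun _ _ h => by rw [condRange, condRange, atomOf_eq_of_mem h]

lemma condRange_neg (Y : Ω → ℝ) : condRange G (-Y) = condRange G Y := by
  ext ω
  simp only [condRange, Pi.neg_apply, neg_sub_neg, abs_sub_comm]

lemma condRange_sub_of_measurable {Y Y' : Ω → ℝ} (hY' : Measurable[G] Y') :
    condRange G (Y - Y') = condRange G Y := by
  ext ω
  simp only [condRange, Pi.sub_apply]
  congr 1
  ext r
  simp only [Set.mem_ofPred_eq]
  refine exists_congr fun ω₁ => and_congr_right fun h₁ =>
    exists_congr fun ω₂ => and_congr_right fun h₂ => ?_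
  rw [hY'.eq_of_mem_atomOf h₁, hY'.eq_of_mem_atomOf h₂, sub_sub_sub_cancel_right]

end Atoms

section Hoeffding

variable {Ω : Type*} [m0 : MeasurableSpace Ω] {μ : Measure Ω} [IsFiniteMeasure μ]

lemma Measurable.integrable_of_finite [Finite Ω] {f : Ω → ℝ} (hf : Measurable f) :
    Integrable f μ := by
  obtain ⟨C, hC⟩ := (Set.finite_range fun ω => ‖f ω‖).bddAbove
  exact .of_bound hf.aestronglyMeasurable C (.of_forall fun ω => hC ⟨ω, rfl⟩)

lemma setIntegral_exp_mul_le_of_mem_Icc {A : Set Ω} (hA : MeasurableSet A) {X : Ω → ℝ}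
    (hX : Measurable X) {a b : ℝ} (hXab : ∀ ω ∈ A, X ω ∈ Set.Icc a b)
    (hX0 : ∫ ω in A, X ω ∂μ = 0) (h : ℝ) :
    ∫ ω in A, exp (h * X ω) ∂μ ≤ μ.real A * exp (h ^ 2 * (b - a) ^ 2 / 8) := by
  by_cases hμA : μ A = 0
  · simp [Measure.restrict_eq_zero.2 hμA, measureReal_def, hμA]
  have := cond_isProbabilityMeasure (μ := μ) hμA
  have hcond : ∀ f : Ω → ℝ, ∫ ω, f ω ∂μ[|A] = (μ.real A)⁻¹ * ∫ ω in A, f ω ∂μ := fun f => by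
    rw [ProbabilityTheory.cond, integral_smul_measure, ENNReal.toReal_inv, smul_eq_mul,
      measureReal_def]
  have hmgf := (hasSubgaussianMGF_of_mem_Icc_of_integral_eq_zero hX.aemeasurable
    ((ae_cond_mem hA).mono fun ω hω => hXab ω hω) (by rw [hcond, hX0, mul_zero])).mgf_le h
  have hμA_pos : 0 < μ.real A := ENNReal.toReal_pos hμA (measure_ne_top μ A)
  rw [mgf, hcond, inv_mul_le_iff₀ hμA_pos] at hmgf
  refine hmgf.trans_eq ?_
  congr 2
  push_cast
  rw [Real.norm_eq_abs, div_pow, sq_abs]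
  ring

end Hoeffding

section ConditionalHoeffding

variable {Ω : Type*} [Fintype Ω] {G : MeasurableSpace Ω} [m0 : MeasurableSpace Ω]
  {μ : Measure Ω}

lemma integral_le_integral_of_setIntegral_atomOf_le (hG : G ≤ m0) {f g : Ω → ℝ}
    (hf : Integrable f μ) (hg : Integrable g μ)
    (hfg : ∀ ω, ∫ x in atomOf G ω, f x ∂μ ≤ ∫ x in atomOf G ω, g x ∂μ) :
    ∫ x, f x ∂μ ≤ ∫ x, g x ∂μ := by
  classical
  have hsum : ∀ u : Ω → ℝ, Integrable u μ →
      ∫ x, u x ∂μ = ∑ A ∈ Finset.univ.image (atomOf G), ∫ x in A, u x ∂μ := by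
    intro u hu
    have hcover : (⋃ A ∈ Finset.univ.image (atomOf G), A) = Set.univ :=
      Set.eq_univ_of_forall fun ω =>
        Set.mem_biUnion (Finset.mem_image_of_mem _ (Finset.mem_univ ω)) (mem_atomOf_self ω)
    rw [← setIntegral_univ, ← hcover]
    refine integral_biUnion_finset _ ?_ ?_ fun A _ => hu.integrableOn
    · simp only [Finset.mem_image, Finset.mem_univ, true_and]
      rintro _ ⟨ω, rfl⟩
      exact hG _ (measurableSet_atomOf ω)
    · simp only [Finset.coe_image, Finset.coe_univ, Set.image_univ]
      rintro _ ⟨ω, rfl⟩ _ ⟨ω', rfl⟩ hne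
      refine Set.disjoint_left.2 fun x hx hx' => hne ?_
      rw [← atomOf_eq_of_mem hx, ← atomOf_eq_of_mem hx']
  rw [hsum f hf, hsum g hg]
  refine Finset.sum_le_sum fun A hA => ?_
  obtain ⟨ω, -, rfl⟩ := Finset.mem_image.1 hA
  exact hfg ω

lemma integral_mul_exp_mul_le_of_setIntegral_eq_zero [IsFiniteMeasure μ] (hG : G ≤ m0)
    {W D : Ω → ℝ} (hW : Measurable[G] W) (hW0 : 0 ≤ W) (hD : Measurable D)
    (hD0 : ∀ A, MeasurableSet[G] A → ∫ ω in A, D ω ∂μ = 0) (h : ℝ) :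
    ∫ ω, W ω * exp (h * D ω) ∂μ ≤ ∫ ω, W ω * exp (h ^ 2 * condRange G D ω ^ 2 / 8) ∂μ := by
  have hW' : Measurable W := hW.mono hG le_rfl
  have hρ : Measurable[G] (condRange G D) := measurable_condRange D
  refine integral_le_integral_of_setIntegral_atomOf_le hG
    (hW'.mul (hD.const_mul h).exp).integrable_of_finite
    (hW'.mul ((((hρ.mono hG le_rfl).pow_const 2).const_mul _).div_const 8).exp).integrable_of_finite
    fun ω₀ => ?_
  set A := atomOf G ω₀
  have hA : MeasurableSet A := hG _ (measurableSet_atomOf ω₀)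
  obtain ⟨ω₁, hω₁, hmin⟩ := A.exists_min_image D A.toFinite ⟨ω₀, mem_atomOf_self ω₀⟩
  have hDA : ∀ ω ∈ A, D ω ∈ Set.Icc (D ω₁) (D ω₁ + condRange G D ω₀) := fun ω hω =>
    ⟨hmin ω hω, by linarith [(le_abs_self _).trans (abs_sub_le_condRange D hω hω₁)]⟩
  have hHoeffding := setIntegral_exp_mul_le_of_mem_Icc hA hD hDA
    (hD0 A (measurableSet_atomOf ω₀)) h
  rw [add_sub_cancel_left] at hHoeffding
  calc ∫ ω in A, W ω * exp (h * D ω) ∂μ = W ω₀ * ∫ ω in A, exp (h * D ω) ∂μ := by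
        rw [← integral_const_mul]
        exact setIntegral_congr_fun hA fun ω hω => by rw [hW.eq_of_mem_atomOf hω]
    _ ≤ W ω₀ * (μ.real A * exp (h ^ 2 * condRange G D ω₀ ^ 2 / 8)) :=
        mul_le_mul_of_nonneg_left hHoeffding (hW0 ω₀)
    _ = ∫ ω in A, W ω * exp (h ^ 2 * condRange G D ω ^ 2 / 8) ∂μ := by
        rw [setIntegral_congr_fun hA
          (g := fun _ => W ω₀ * exp (h ^ 2 * condRange G D ω₀ ^ 2 / 8))
          fun ω hω => by rw [hW.eq_of_mem_atomOf hω, hρ.eq_of_mem_atomOf hω],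
          setIntegral_const, smul_eq_mul]
        ring

end ConditionalHoeffding

noncomputable def sumCondRangeSq {Ω : Type*} [m0 : MeasurableSpace Ω] (ℱ : Filtration ℕ m0)
    (M : ℕ → Ω → ℝ) (k : ℕ) (ω : Ω) : ℝ :=
  ∑ i ∈ Finset.Icc 1 k, condRange (ℱ (i - 1)) (M i) ω ^ 2

section Azuma

variable {Ω : Type*} [Fintype Ω] [m0 : MeasurableSpace Ω] {μ : Measure Ω}
  {ℱ : Filtration ℕ m0} {M : ℕ → Ω → ℝ}

omit [Fintype Ω] in
lemma sumCondRangeSq_succ (k : ℕ) (ω : Ω) : sumCondRangeSq ℱ M (k + 1) ω =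
    sumCondRangeSq ℱ M k ω + condRange (ℱ k) (M (k + 1)) ω ^ 2 := by
  rw [sumCondRangeSq, Finset.sum_Icc_succ_top (Nat.le_add_left 1 k), Nat.add_sub_cancel]
  rfl

omit [Fintype Ω] in
lemma sumCondRangeSq_neg : sumCondRangeSq ℱ (-M) = sumCondRangeSq ℱ M := by
  ext k ω
  simp only [sumCondRangeSq, Pi.neg_apply, condRange_neg]

lemma measurable_sumCondRangeSq {j k : ℕ} (hkj : k ≤ j + 1) :
    Measurable[ℱ j] (sumCondRangeSq ℱ M k) :=
  Finset.measurable_sum _ fun i hi =>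
    ((measurable_condRange _).mono (ℱ.mono (by grind)) le_rfl).pow_const 2

variable [IsProbabilityMeasure μ]

lemma integral_exp_mul_sub_sumCondRangeSq_le_one (hM : Martingale M ℱ μ) (h : ℝ) (k : ℕ) :
    ∫ ω, exp (h * (M k ω - M 0 ω) - h ^ 2 / 8 * sumCondRangeSq ℱ M k ω) ∂μ ≤ 1 := by
  induction k with
  | zero => simp [sumCondRangeSq]
  | succ k ih =>
    have hMmeas : ∀ j, Measurable[ℱ j] (M j) := fun j => (hM.stronglyAdapted j).measurable
    set W : Ω → ℝ := fun ω =>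
      exp (h * (M k ω - M 0 ω) - h ^ 2 / 8 * sumCondRangeSq ℱ M (k + 1) ω)
    have hW : Measurable[ℱ k] W :=
      ((((hMmeas k).sub ((hMmeas 0).mono (ℱ.mono k.zero_le) le_rfl)).const_mul h).sub
        ((measurable_sumCondRangeSq le_rfl).const_mul _)).exp
    have hincrement : ∀ A, MeasurableSet[ℱ k] A → ∫ ω in A, (M (k + 1) ω - M k ω) ∂μ = 0 := by
      intro A hA
      rw [integral_sub (hM.integrable _).integrableOn (hM.integrable _).integrableOn,
        hM.setIntegral_eq k.le_succ hA, sub_self]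
    have hstep := integral_mul_exp_mul_le_of_setIntegral_eq_zero (ℱ.le k) hW
      (fun ω => (exp_pos _).le) (((hMmeas _).mono (ℱ.le _) le_rfl).sub
        ((hMmeas k).mono (ℱ.le k) le_rfl)) hincrement h
    rw [condRange_sub_of_measurable (hMmeas k)] at hstep
    calc ∫ ω, exp (h * (M (k + 1) ω - M 0 ω) - h ^ 2 / 8 * sumCondRangeSq ℱ M (k + 1) ω) ∂μ
        = ∫ ω, W ω * exp (h * (M (k + 1) - M k) ω) ∂μ := by
          refine integral_congr_ae (ae_of_all _ fun ω => ?_)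
          simp only [W, Pi.sub_apply, ← exp_add]
          ring_nf
      _ ≤ ∫ ω, W ω * exp (h ^ 2 * condRange (ℱ k) (M (k + 1)) ω ^ 2 / 8) ∂μ := hstep
      _ = ∫ ω, exp (h * (M k ω - M 0 ω) - h ^ 2 / 8 * sumCondRangeSq ℱ M k ω) ∂μ := by
          refine integral_congr_ae (ae_of_all _ fun ω => ?_)
          simp only [W, ← exp_add, sumCondRangeSq_succ]
          ring_nf
      _ ≤ 1 := ih

lemma measure_le_sub_and_sumCondRangeSq_le (hM : Martingale M ℱ μ) (t : ℕ) {a r2 : ℝ}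
    (ha : 0 ≤ a) (hr2 : 0 ≤ r2) :
    μ {ω | a ≤ M t ω - M 0 ω ∧ sumCondRangeSq ℱ M t ω ≤ r2}
      ≤ ENNReal.ofReal (exp (-2 * a ^ 2 / r2)) := by
  set h := 4 * a / r2
  set V : Ω → ℝ := fun ω => exp (h * (M t ω - M 0 ω) - h ^ 2 / 8 * sumCondRangeSq ℱ M t ω)
  -- `h = 4 a / r2` maximizes `h * a - h ^ 2 / 8 * r2`; for `r2 = 0` both sides vanish
  -- because `x / 0 = 0`.
  have hexponent : 2 * a ^ 2 / r2 = h * a - h ^ 2 / 8 * r2 := by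
    rcases hr2.eq_or_lt with rfl | hr2
    · simp [h]
    · simp only [h]
      field_simp
      ring
  have hsubset : {ω | a ≤ M t ω - M 0 ω ∧ sumCondRangeSq ℱ M t ω ≤ r2}
      ⊆ {ω | exp (2 * a ^ 2 / r2) ≤ V ω} := by
    rintro ω ⟨hMa, hR⟩
    rw [Set.mem_ofPred_eq, exp_le_exp, hexponent]
    have h0 : 0 ≤ h := by positivity
    exact sub_le_sub (mul_le_mul_of_nonneg_left hMa h0)
      (mul_le_mul_of_nonneg_left hR (by positivity))
  have hV : Measurable V := by
    have hMmeas : ∀ j, Measurable (M j) := fun j =>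
      ((hM.stronglyAdapted j).measurable).mono (ℱ.le j) le_rfl
    exact ((((hMmeas t).sub (hMmeas 0)).const_mul h).sub
      (((measurable_sumCondRangeSq t.le_succ).mono (ℱ.le _) le_rfl).const_mul _)).exp
  have hMarkov := mul_meas_ge_le_integral_of_nonneg (ae_of_all μ fun ω => (exp_pos _).le)
    hV.integrable_of_finite (exp (2 * a ^ 2 / r2))
  calc μ {ω | a ≤ M t ω - M 0 ω ∧ sumCondRangeSq ℱ M t ω ≤ r2}
      ≤ μ {ω | exp (2 * a ^ 2 / r2) ≤ V ω} := measure_mono hsubset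
    _ = ENNReal.ofReal (μ.real {ω | exp (2 * a ^ 2 / r2) ≤ V ω}) := (ofReal_measureReal).symm
    _ ≤ ENNReal.ofReal (exp (-2 * a ^ 2 / r2)) := by
      refine ENNReal.ofReal_le_ofReal ?_
      rw [neg_mul, neg_div, exp_neg, inv_eq_one_div, le_div_iff₀' (exp_pos _)]
      exact hMarkov.trans (integral_exp_mul_sub_sumCondRangeSq_le_one hM h t)

lemma measure_le_abs_sub_and_sumCondRangeSq_le (hM : Martingale M ℱ μ) (t : ℕ) {a r2 : ℝ}
    (ha : 0 ≤ a) (hr2 : 0 ≤ r2) :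
    μ {ω | a ≤ |M t ω - M 0 ω| ∧ sumCondRangeSq ℱ M t ω ≤ r2}
      ≤ ENNReal.ofReal (2 * exp (-2 * a ^ 2 / r2)) := by
  calc μ {ω | a ≤ |M t ω - M 0 ω| ∧ sumCondRangeSq ℱ M t ω ≤ r2}
      ≤ μ ({ω | a ≤ M t ω - M 0 ω ∧ sumCondRangeSq ℱ M t ω ≤ r2}
          ∪ {ω | a ≤ (-M) t ω - (-M) 0 ω ∧ sumCondRangeSq ℱ (-M) t ω ≤ r2}) := by
        refine measure_mono fun ω ⟨hMa, hR⟩ => ?_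
        simp only [sumCondRangeSq_neg, Pi.neg_apply, Set.mem_union, Set.mem_ofPred_eq]
        rcases le_abs'.1 hMa with hneg | hpos
        · exact Or.inr ⟨by linarith, hR⟩
        · exact Or.inl ⟨hpos, hR⟩
    _ ≤ ENNReal.ofReal (exp (-2 * a ^ 2 / r2)) + ENNReal.ofReal (exp (-2 * a ^ 2 / r2)) :=
        (measure_union_le _ _).trans <| add_le_add
          (measure_le_sub_and_sumCondRangeSq_le hM t ha hr2)
          (measure_le_sub_and_sumCondRangeSq_le hM.neg t ha hr2)
    _ = ENNReal.ofReal (2 * exp (-2 * a ^ 2 / r2)) := by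
        rw [← ENNReal.ofReal_add (exp_pos _).le (exp_pos _).le, two_mul]

end Azuma

/-- Azuma–Hoeffding with sum of squared conditional ranges (McDiarmid, Thm 3.14). -/
theorem stmt0 {Ω : Type*} [Fintype Ω] [m0 : MeasurableSpace Ω]
    (μ : Measure Ω) [IsProbabilityMeasure μ] (t : ℕ)
    (𝒢 : ℕ → MeasurableSpace Ω) (hmono : Monotone 𝒢) (hle : ∀ i, 𝒢 i ≤ m0)
    (h0 : 𝒢 0 = ⊥) (Z : Ω → ℝ) (hZ : Measurable[𝒢 t] Z)
    (m : ℝ) (hm : m = ∫ ω, Z ω ∂μ) (a r2 : ℝ) (ha : 0 ≤ a) (hr2 : 0 ≤ r2) :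
    μ {ω | a ≤ |Z ω - m| ∧
        ∑ i ∈ Finset.Icc 1 t, (condRange (𝒢 (i - 1)) (μ[Z|𝒢 i]) ω) ^ 2 ≤ r2}
      ≤ ENNReal.ofReal (2 * Real.exp (-2 * a ^ 2 / r2)) := by
  let ℱ : Filtration ℕ m0 := ⟨𝒢, hmono, hle⟩
  have hZt : μ[Z|𝒢 t] = Z := condExp_of_stronglyMeasurable (hle t) hZ.stronglyMeasurable
    (hZ.mono (hle t) le_rfl).integrable_of_finite
  have hZ0 : μ[Z|𝒢 0] = fun _ => m := by rw [h0, condExp_bot, hm]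
  have := measure_le_abs_sub_and_sumCondRangeSq_le (martingale_condExp Z ℱ μ) t ha hr2
  simp only [ℱ, sumCondRangeSq, hZt, hZ0] at this
  exact this
end

section
/- Fix positive integers d and C and λ > 0. Define F : ℝ^{C+1} → ℝ^{C+1} by F_0(ξ) = -λξ(0) - λg_0(ξ) + ξ(1); for 0 < k < C, F_k(ξ) = λξ(k-1) - λξ(k) + λg_{k-1}(ξ) - λg_k(ξ) - kξ(k) + (k+1)ξ(k+1); F_C(ξ) = λξ(C-1) + λg_{C-1}(ξ) - Cξ(C), where the g_j are as in the routing model. Then F is Lipschitz with constant 8d²(λ+1)(C+1)² on Δ^{C+1}_≤ = {ξ ≥ 0 : Σ_k ξ(k) ≤ 1}, with respect to the ℓ∞ norm. -/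
/-- `psum ξ j = ξ(0) + ... + ξ(j-1)`, so that `ξ(≤ j) = psum ξ (j+1)`. -/
noncomputable def psum (ξ : ℕ → ℝ) (j : ℕ) : ℝ := ∑ k ∈ Finset.range j, ξ k

/-- The function `g_j` of the routing model (arrival rate of alternatively routed
calls onto links with load `j`), for `d` choices and capacity `C`. -/
noncomputable def gfun (d C : ℕ) (ξ : ℕ → ℝ) (j : ℕ) : ℝ :=
  2 * ξ C * ξ j * psum ξ (j + 1) *
      ∑ r ∈ Finset.range d,
        (1 - (psum ξ (j + 1)) ^ 2) ^ r * (1 - (psum ξ j) ^ 2) ^ (d - 1 - r)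
  + 2 * ξ C * ξ j *
      ∑ i ∈ Finset.Ico (j + 1) C, ξ i *
        ∑ r ∈ Finset.range d,
          (1 - (psum ξ (i + 1)) ^ 2) ^ r * (1 - (psum ξ i) ^ 2) ^ (d - 1 - r)


/-- The drift vector field `F` of the routing model. -/
noncomputable def Fvec (d C : ℕ) (lam : ℝ) (ξ : ℕ → ℝ) (k : ℕ) : ℝ :=
  if k = 0 then -lam * ξ 0 - lam * gfun d C ξ 0 + ξ 1
  else if k = C then lam * ξ (C - 1) + lam * gfun d C ξ (C - 1) - C * ξ C
  else lam * ξ (k - 1) - lam * ξ k + lam * gfun d C ξ (k - 1) - lam * gfun d C ξ k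
       - k * ξ k + (k + 1) * ξ (k + 1)

/-! On the sub-simplex every building block of `F` (the coordinates, the partial sums `ξ(≤ j)`,
the bases `1 - ξ(≤ j)²` and their powers) lies in `[-1, 1]`, so the product rule
`|ab - a'b'| ≤ |a| |b - b'| + |b'| |a - a'|` makes each of them Lipschitz with an explicit constant.
The one idea beyond bookkeeping is to merge the two sums defining `g_j` into
`g_j = 2 ξ(C) ξ(j) ∑_{i<C} ξ(i) w_{max(i,j)}` with weights `|w_i| ≤ d`: the inner sum is then
controlled by the total mass `∑ ξ(i) ≤ 1` rather than by the number of terms, which gives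
`|g_j(ξ) - g_j(η)| ≤ 4 d² (C+1) ‖ξ - η‖∞` and leaves enough room for the constant
`8 d² (λ+1) (C+1)²`.
-/

open Finset

lemma abs_mul_sub_mul_le (a a' b b' : ℝ) :
    |a * b - a' * b'| ≤ |a| * |b - b'| + |b'| * |a - a'| := by
  calc |a * b - a' * b'| = |a * (b - b') + b' * (a - a')| := by ring_nf
    _ ≤ |a| * |b - b'| + |b'| * |a - a'| := by
      rw [← abs_mul, ← abs_mul]; exact abs_add_le _ _

lemma abs_pow_sub_pow_le_of_abs_le_one {a b : ℝ} (ha : |a| ≤ 1) (hb : |b| ≤ 1) (n : ℕ) :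
    |a ^ n - b ^ n| ≤ n * |a - b| := by
  calc |a ^ n - b ^ n| ≤ |a - b| * n * max |a| |b| ^ (n - 1) := abs_pow_sub_pow_le a b n
    _ ≤ |a - b| * n * 1 := by gcongr; exact pow_le_one₀ (by positivity) (max_le ha hb)
    _ = n * |a - b| := by ring

lemma abs_one_sub_sq_le_one {p : ℝ} (h0 : 0 ≤ p) (h1 : p ≤ 1) : |1 - p ^ 2| ≤ 1 := by
  rw [abs_le]; constructor <;> nlinarith

lemma abs_one_sub_sq_sub_le {p q : ℝ} (hp0 : 0 ≤ p) (hp1 : p ≤ 1) (hq0 : 0 ≤ q) (hq1 : q ≤ 1) :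
    |(1 - p ^ 2) - (1 - q ^ 2)| ≤ 2 * |p - q| := by
  calc |(1 - p ^ 2) - (1 - q ^ 2)| = |p + q| * |p - q| := by rw [← abs_mul, ← abs_neg]; ring_nf
    _ ≤ 2 * |p - q| := by
      gcongr; rw [abs_of_nonneg (by positivity)]; linarith

lemma abs_geom_sum₂_le {x y : ℝ} (hx : |x| ≤ 1) (hy : |y| ≤ 1) (n : ℕ) :
    |∑ i ∈ range n, x ^ i * y ^ (n - 1 - i)| ≤ n := by
  calc |∑ i ∈ range n, x ^ i * y ^ (n - 1 - i)|
      ≤ ∑ i ∈ range n, |x ^ i * y ^ (n - 1 - i)| := abs_sum_le_sum_abs _ _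
    _ ≤ ∑ _i ∈ range n, (1 : ℝ) := by
      gcongr with i
      rw [abs_mul, abs_pow, abs_pow]
      exact mul_le_one₀ (pow_le_one₀ (abs_nonneg x) hx) (by positivity)
        (pow_le_one₀ (abs_nonneg y) hy)
    _ = n := by simp

lemma abs_geom_sum₂_sub_le {x y x' y' δ : ℝ} (hx : |x| ≤ 1) (hy : |y| ≤ 1) (hx' : |x'| ≤ 1)
    (hy' : |y'| ≤ 1) (hxx' : |x - x'| ≤ δ) (hyy' : |y - y'| ≤ δ) (n : ℕ) :
    |∑ i ∈ range n, x ^ i * y ^ (n - 1 - i) - ∑ i ∈ range n, x' ^ i * y' ^ (n - 1 - i)|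
      ≤ n * (n - 1) * δ := by
  rw [← sum_sub_distrib]
  calc _ ≤ ∑ i ∈ range n, |x ^ i * y ^ (n - 1 - i) - x' ^ i * y' ^ (n - 1 - i)| :=
        abs_sum_le_sum_abs _ _
    _ ≤ ∑ _i ∈ range n, (n - 1 : ℝ) * δ := by
      refine sum_le_sum fun i hi => ?_
      have hcast : ((n - 1 - i : ℕ) : ℝ) + i = n - 1 := by
        have := mem_range.mp hi
        rw [Nat.cast_sub (by omega), Nat.cast_sub (by omega)]; ring
      calc _ ≤ |x ^ i| * |y ^ (n - 1 - i) - y' ^ (n - 1 - i)|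
              + |y' ^ (n - 1 - i)| * |x ^ i - x' ^ i| := abs_mul_sub_mul_le _ _ _ _
        _ ≤ 1 * ((n - 1 - i : ℕ) * δ) + 1 * (i * δ) := by
          gcongr
          · rw [abs_pow]; exact pow_le_one₀ (abs_nonneg x) hx
          · exact (abs_pow_sub_pow_le_of_abs_le_one hy hy' _).trans (by gcongr)
          · rw [abs_pow]; exact pow_le_one₀ (abs_nonneg y') hy'
          · exact (abs_pow_sub_pow_le_of_abs_le_one hx hx' _).trans (by gcongr)
        _ = (n - 1 : ℝ) * δ := by rw [← hcast]; ring
    _ = n * (n - 1) * δ := by rw [sum_const, card_range, nsmul_eq_mul]; ring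

lemma abs_sum_mul_sub_sum_mul_le {ι : Type*} (s : Finset ι) {a a' b b' : ι → ℝ} {L B : ℝ}
    (ha : ∀ i ∈ s, 0 ≤ a i) (hb : ∀ i ∈ s, |b i - b' i| ≤ L) (hb' : ∀ i ∈ s, |b' i| ≤ B) :
    |∑ i ∈ s, a i * b i - ∑ i ∈ s, a' i * b' i|
      ≤ (∑ i ∈ s, a i) * L + B * ∑ i ∈ s, |a i - a' i| := by
  rw [← sum_sub_distrib, sum_mul, mul_sum, ← sum_add_distrib]
  refine (abs_sum_le_sum_abs _ _).trans (sum_le_sum fun i hi => ?_)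
  refine (abs_mul_sub_mul_le _ _ _ _).trans ?_
  rw [abs_of_nonneg (ha i hi)]
  gcongr
  exacts [ha i hi, hb i hi, hb' i hi]

lemma abs_psum_sub_psum_le {ξ η : ℕ → ℝ} {M : ℝ} {j : ℕ} (hM : ∀ i < j, |ξ i - η i| ≤ M) :
    |psum ξ j - psum η j| ≤ j * M := by
  unfold psum
  rw [← sum_sub_distrib]
  calc _ ≤ ∑ i ∈ range j, |ξ i - η i| := abs_sum_le_sum_abs _ _
    _ ≤ ∑ _i ∈ range j, M := sum_le_sum fun i hi => hM i (mem_range.mp hi)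
    _ = j * M := by simp

def InSubSimplex (C : ℕ) (ξ : ℕ → ℝ) : Prop :=
  (∀ k ≤ C, 0 ≤ ξ k) ∧ ∑ k ∈ range (C + 1), ξ k ≤ 1

namespace InSubSimplex

variable {C : ℕ} {ξ : ℕ → ℝ}

lemma psum_nonneg (h : InSubSimplex C ξ) {j : ℕ} (hj : j ≤ C + 1) : 0 ≤ psum ξ j :=
  sum_nonneg fun i hi => h.1 i (by have := mem_range.mp hi; omega)

lemma psum_le_one (h : InSubSimplex C ξ) {j : ℕ} (hj : j ≤ C + 1) : psum ξ j ≤ 1 :=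
  (sum_le_sum_of_subset_of_nonneg (range_subset_range.mpr hj) fun i hi _ =>
    h.1 i (by have := mem_range.mp hi; omega)).trans h.2

lemma abs_le_one (h : InSubSimplex C ξ) {k : ℕ} (hk : k ≤ C) : |ξ k| ≤ 1 := by
  rw [abs_of_nonneg (h.1 k hk)]
  exact (single_le_sum (fun i hi => h.1 i (by have := mem_range.mp hi; omega))
    (mem_range.mpr (by omega))).trans h.2

lemma abs_one_sub_psum_sq_le_one (h : InSubSimplex C ξ) {j : ℕ} (hj : j ≤ C + 1) :
    |1 - psum ξ j ^ 2| ≤ 1 :=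
  abs_one_sub_sq_le_one (h.psum_nonneg hj) (h.psum_le_one hj)

end InSubSimplex

noncomputable def gweight (d : ℕ) (ξ : ℕ → ℝ) (j : ℕ) : ℝ :=
  ∑ r ∈ range d, (1 - psum ξ (j + 1) ^ 2) ^ r * (1 - psum ξ j ^ 2) ^ (d - 1 - r)

section Routing

variable {d C : ℕ} {ξ η : ℕ → ℝ} {M : ℝ}

lemma abs_gweight_le (hξ : InSubSimplex C ξ) {j : ℕ} (hj : j ≤ C) : |gweight d ξ j| ≤ d :=
  abs_geom_sum₂_le (hξ.abs_one_sub_psum_sq_le_one (by omega))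
    (hξ.abs_one_sub_psum_sq_le_one (by omega)) d

lemma abs_gweight_sub_le (hξ : InSubSimplex C ξ) (hη : InSubSimplex C η)
    (hM : ∀ m ≤ C, |ξ m - η m| ≤ M) {j : ℕ} (hj : j ≤ C) :
    |gweight d ξ j - gweight d η j| ≤ d * (d - 1) * (2 * (C + 1) * M) := by
  have hM0 : 0 ≤ M := (abs_nonneg _).trans (hM 0 (Nat.zero_le C))
  have hsq : ∀ i ≤ C + 1, |(1 - psum ξ i ^ 2) - (1 - psum η i ^ 2)| ≤ 2 * (C + 1) * M := by
    intro i hi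
    calc _ ≤ 2 * |psum ξ i - psum η i| :=
          abs_one_sub_sq_sub_le (hξ.psum_nonneg hi) (hξ.psum_le_one hi)
            (hη.psum_nonneg hi) (hη.psum_le_one hi)
      _ ≤ 2 * (i * M) := by gcongr; exact abs_psum_sub_psum_le fun m hm => hM m (by omega)
      _ ≤ 2 * (C + 1) * M := by
        rw [← mul_assoc]; gcongr; exact_mod_cast hi
  exact abs_geom_sum₂_sub_le (hξ.abs_one_sub_psum_sq_le_one (by omega))
    (hξ.abs_one_sub_psum_sq_le_one (by omega)) (hη.abs_one_sub_psum_sq_le_one (by omega))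
    (hη.abs_one_sub_psum_sq_le_one (by omega)) (hsq _ (by omega)) (hsq _ (by omega)) d

lemma gfun_eq_sum {j : ℕ} (hj : j < C) :
    gfun d C ξ j = 2 * ξ C * ξ j * ∑ i ∈ range C, ξ i * gweight d ξ (max i j) := by
  rw [← sum_range_add_sum_Ico _ (show j + 1 ≤ C from hj)]
  have hlow : ∑ i ∈ range (j + 1), ξ i * gweight d ξ (max i j)
      = psum ξ (j + 1) * gweight d ξ j := by
    rw [psum, sum_mul]
    exact sum_congr rfl fun i hi => by rw [max_eq_right (Nat.lt_succ_iff.mp (mem_range.mp hi))]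
  have hhigh : ∑ i ∈ Ico (j + 1) C, ξ i * gweight d ξ (max i j)
      = ∑ i ∈ Ico (j + 1) C, ξ i * gweight d ξ i :=
    sum_congr rfl fun i hi => by rw [max_eq_left (by have := (mem_Ico.mp hi).1; omega)]
  rw [hlow, hhigh, gfun]
  simp only [gweight]
  ring

lemma abs_gfun_sub_le (hξ : InSubSimplex C ξ) (hη : InSubSimplex C η)
    (hM : ∀ m ≤ C, |ξ m - η m| ≤ M) {j : ℕ} (hj : j < C) :
    |gfun d C ξ j - gfun d C η j| ≤ 4 * d ^ 2 * (C + 1) * M := by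
  have hM0 : 0 ≤ M := (abs_nonneg _).trans (hM 0 (Nat.zero_le C))
  set L : ℝ := d * (d - 1) * (2 * (C + 1) * M)
  have hL : ∀ i ∈ range C, |gweight d ξ (max i j) - gweight d η (max i j)| ≤ L :=
    fun i hi => abs_gweight_sub_le hξ hη hM (by have := mem_range.mp hi; omega)
  have hL0 : 0 ≤ L := (abs_nonneg _).trans (hL j (mem_range.mpr hj))
  have hw : ∀ i ∈ range C, |gweight d η (max i j)| ≤ d :=
    fun i hi => abs_gweight_le hη (by have := mem_range.mp hi; omega)
  set U := ∑ i ∈ range C, ξ i * gweight d ξ (max i j)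
  set U' := ∑ i ∈ range C, η i * gweight d η (max i j)
  have hU' : |U'| ≤ d := by
    calc |U'| ≤ ∑ i ∈ range C, |η i * gweight d η (max i j)| := abs_sum_le_sum_abs _ _
      _ ≤ ∑ i ∈ range C, η i * d := by
        gcongr with i hi
        rw [abs_mul, abs_of_nonneg (hη.1 i (by have := mem_range.mp hi; omega))]
        gcongr
        exacts [hη.1 i (by have := mem_range.mp hi; omega), hw i hi]
      _ ≤ d := by
        rw [← sum_mul]
        exact mul_le_of_le_one_left (Nat.cast_nonneg d) (hη.psum_le_one (by omega))
  have hUU' : |U - U'| ≤ L + d * (C * M) := by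
    calc |U - U'| ≤ (∑ i ∈ range C, ξ i) * L + d * ∑ i ∈ range C, |ξ i - η i| :=
          abs_sum_mul_sub_sum_mul_le _
            (fun i hi => hξ.1 i (by have := mem_range.mp hi; omega)) hL hw
      _ ≤ 1 * L + d * ∑ _i ∈ range C, M := by
        gcongr with i hi
        · exact hξ.psum_le_one (by omega)
        · exact hM i (by have := mem_range.mp hi; omega)
      _ = L + d * (C * M) := by simp
  have ha : |ξ C * ξ j| ≤ 1 := by
    rw [abs_mul]
    exact mul_le_one₀ (hξ.abs_le_one le_rfl) (abs_nonneg _) (hξ.abs_le_one hj.le)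
  have haa' : |ξ C * ξ j - η C * η j| ≤ 2 * M := by
    calc _ ≤ |ξ C| * |ξ j - η j| + |η j| * |ξ C - η C| := abs_mul_sub_mul_le _ _ _ _
      _ ≤ 1 * M + 1 * M := by
        gcongr
        exacts [hξ.abs_le_one le_rfl, hM j hj.le, hη.abs_le_one hj.le, hM C le_rfl]
      _ = 2 * M := by ring
  rw [gfun_eq_sum hj, gfun_eq_sum hj]
  calc |2 * ξ C * ξ j * U - 2 * η C * η j * U'| = 2 * |ξ C * ξ j * U - η C * η j * U'| := by
        simp only [mul_assoc, ← mul_sub, abs_mul, abs_two]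
    _ ≤ 2 * (|ξ C * ξ j| * |U - U'| + |U'| * |ξ C * ξ j - η C * η j|) := by
      gcongr; exact abs_mul_sub_mul_le _ _ _ _
    _ ≤ 2 * (1 * (L + d * (C * M)) + d * (2 * M)) := by gcongr
    _ ≤ 4 * d ^ 2 * (C + 1) * M := by
      have : (0 : ℝ) ≤ d * C * M := by positivity
      nlinarith

end Routing

lemma abs_Fvec_sub_le {d C : ℕ} {lam M G : ℝ} {ξ η : ℕ → ℝ} (hC : 0 < C) (hlam : 0 ≤ lam)
    (hM : ∀ m ≤ C, |ξ m - η m| ≤ M) (hG : ∀ j < C, |gfun d C ξ j - gfun d C η j| ≤ G)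
    {k : ℕ} (hk : k ≤ C) :
    |Fvec d C lam ξ k - Fvec d C lam η k| ≤ 2 * lam * (M + G) + 2 * C * M := by
  have hC1 : (1 : ℝ) ≤ C := by exact_mod_cast hC
  rw [abs_le]
  by_cases hk0 : k = 0
  · subst hk0
    have h0 := abs_le.mp (hM 0 (Nat.zero_le C))
    have h1 := abs_le.mp (hM 1 hC)
    have hg := abs_le.mp (hG 0 hC)
    simp only [Fvec, if_pos]
    constructor <;> nlinarith
  by_cases hkC : k = C
  · subst hkC
    have h0 := abs_le.mp (hM (k - 1) (Nat.sub_le k 1))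
    have h1 := abs_le.mp (hM k le_rfl)
    have hg := abs_le.mp (hG (k - 1) (by omega))
    simp only [Fvec, if_neg hk0, if_pos]
    constructor <;> nlinarith
  · have h0 := abs_le.mp (hM (k - 1) (by omega))
    have h1 := abs_le.mp (hM k hk)
    have h2 := abs_le.mp (hM (k + 1) (by omega))
    have hg0 := abs_le.mp (hG (k - 1) (by omega))
    have hg1 := abs_le.mp (hG k (by omega))
    have hkC' : (k : ℝ) + 1 ≤ C := by exact_mod_cast (show k + 1 ≤ C by omega)
    simp only [Fvec, if_neg hk0, if_neg hkC]
    constructor <;> nlinarith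

/-- `F` is Lipschitz with constant `8 d² (λ+1) (C+1)²` on the set of nonnegative
vectors with coordinate sum at most 1, with respect to the ℓ∞ norm. -/
theorem stmt7 (d C : ℕ) (hd : 0 < d) (hC : 0 < C) (lam : ℝ) (hlam : 0 < lam)
    (ξ η : ℕ → ℝ)
    (hξ0 : ∀ k ≤ C, 0 ≤ ξ k) (hξ1 : ∑ k ∈ Finset.range (C + 1), ξ k ≤ 1)
    (hη0 : ∀ k ≤ C, 0 ≤ η k) (hη1 : ∑ k ∈ Finset.range (C + 1), η k ≤ 1)
    (k : ℕ) (hk : k ≤ C) :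
    |Fvec d C lam ξ k - Fvec d C lam η k|
      ≤ 8 * (d : ℝ) ^ 2 * (lam + 1) * ((C : ℝ) + 1) ^ 2 *
          (Finset.range (C + 1)).sup'
            (Finset.nonempty_range_iff.mpr (Nat.succ_ne_zero C))
            (fun m => |ξ m - η m|) := by
  set M := (Finset.range (C + 1)).sup' (Finset.nonempty_range_iff.mpr (Nat.succ_ne_zero C))
    (fun m => |ξ m - η m|)
  have hM : ∀ m ≤ C, |ξ m - η m| ≤ M := fun m hm =>
    le_sup' (fun m => |ξ m - η m|) (mem_range.mpr (Nat.lt_succ_of_le hm))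
  have hM0 : 0 ≤ M := (abs_nonneg _).trans (hM 0 (Nat.zero_le C))
  have hG := fun j (hj : j < C) => abs_gfun_sub_le (d := d) ⟨hξ0, hξ1⟩ ⟨hη0, hη1⟩ hM hj
  refine (abs_Fvec_sub_le hC hlam.le hM hG hk).trans ?_
  have hd1 : (1 : ℝ) ≤ d := by exact_mod_cast hd
  have hC1 : (1 : ℝ) ≤ C := by exact_mod_cast hC
  have hd2 : (1 : ℝ) ≤ d ^ 2 := one_le_pow₀ hd1
  have hlam_coeff : 2 ≤ 8 * (d : ℝ) ^ 2 * ((C + 1) * C) := by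
    nlinarith [mul_le_mul hd2 (show (2 : ℝ) ≤ (C + 1) * C by nlinarith) zero_le_two
      (sq_nonneg _)]
  have hC_coeff : 2 * (C : ℝ) ≤ 8 * d ^ 2 * (C + 1) ^ 2 := by
    nlinarith [mul_le_mul hd2 (show (C : ℝ) ≤ (C + 1) ^ 2 by nlinarith) (by positivity)
      (sq_nonneg _)]
  nlinarith [mul_le_mul_of_nonneg_left hlam_coeff (mul_nonneg hlam.le hM0),
    mul_le_mul_of_nonneg_left hC_coeff hM0]
end

section
/- Let d, C be positive integers, λ > 0, and let F be the vector field of the routing model. For any ξ_0 in the simplex Δ^{C+1}_= = {ξ ≥ 0 : Σ_{k=0}^C ξ(k) = 1}, the ODE dξ_t/dt = F(ξ_t) with initial condition ξ_0 has a unique solution defined for all t ≥ 0, and moreover ξ_t ∈ Δ^{C+1}_= for all t ≥ 0. -/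
/-!
`F` is smooth, hence locally Lipschitz, so forward solutions are unique. For existence, compose
`F` with a Lipschitz retraction `truncate` of `ℝ^{C+1}` onto the compact set `{y ≥ 0, ∑ y ≤ 1}`
which sends a point with `x k ≤ 0` to one with `y k = 0`. The composite is globally Lipschitz and
bounded, hence has a global solution. Since `∑ F_k = 0` identically and `F_k ≥ 0` on the face
`y k = 0`, this solution keeps mass `1` and nonnegative coordinates, i.e. it stays in the simplex,
where `truncate` is the identity.
-/

open Finset Set Topology NNReal

lemma nonneg_of_hasDerivAt_nonneg_of_nonpos {f f' : ℝ → ℝ} {a : ℝ}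
    (hf : ∀ t, HasDerivAt f (f' t) t) (ha : 0 ≤ f a) (hf' : ∀ t, f t ≤ 0 → 0 ≤ f' t) :
    ∀ t, a ≤ t → 0 ≤ f t := by
  intro t hat
  refine le_of_forall_pos_le_add fun δ hδ => ?_
  set ε := δ / (t - a + 1)
  have hε : 0 < ε := div_pos hδ (by linarith)
  -- `-f` stays below the line `ε (s - a)`: where it touches it, `f ≤ 0` forces `-f' ≤ 0 < ε`.
  have hline := image_le_of_deriv_right_lt_deriv_boundary' (f := fun s => -f s)
    (f' := fun s => -f' s) (B := fun s => ε * (s - a)) (B' := fun _ => ε)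
    (HasDerivAt.continuousOn fun s _ => (hf s).neg)
    (fun s _ => (hf s).neg.hasDerivWithinAt) (by simpa using ha) (by fun_prop)
    (fun s _ => (((hasDerivAt_id s).sub_const a).const_mul ε).hasDerivWithinAt.congr_deriv
      (by simp))
    (fun s hs hfs => by
      have := hf' s (by nlinarith [mul_nonneg hε.le (sub_nonneg.mpr hs.1)])
      linarith)
    ⟨hat, le_rfl⟩
  have : ε * (t - a) ≤ δ := by
    rw [div_mul_eq_mul_div, div_le_iff₀ (by linarith)]
    nlinarith
  linarith [show -f t ≤ ε * (t - a) from hline]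

lemma ODE_solution_unique_Ici_of_locallyLipschitz {E : Type*} [NormedAddCommGroup E]
    [NormedSpace ℝ E] {v : E → E} (hv : LocallyLipschitz v) {f g : ℝ → E} {a : ℝ}
    (hf : ∀ t, a ≤ t → HasDerivAt f (v (f t)) t) (hg : ∀ t, a ≤ t → HasDerivAt g (v (g t)) t)
    (ha : f a = g a) : EqOn f g (Ici a) := by
  intro T hT
  have hfc : ContinuousOn f (Icc a T) := HasDerivAt.continuousOn fun t ht => hf t ht.1
  have hgc : ContinuousOn g (Icc a T) := HasDerivAt.continuousOn fun t ht => hg t ht.1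
  -- On `[a, T]` both solutions stay in a compact set, on which `v` is Lipschitz.
  set K := f '' Icc a T ∪ g '' Icc a T
  obtain ⟨L, hL⟩ := hv.locallyLipschitzOn.exists_lipschitzOnWith_of_compact
    ((isCompact_Icc.image_of_continuousOn hfc).union (isCompact_Icc.image_of_continuousOn hgc))
  exact ODE_solution_unique_of_mem_Icc_right (s := fun _ => K) (fun _ _ => hL) hfc
    (fun t ht => (hf t ht.1).hasDerivWithinAt) (fun t ht => .inl ⟨t, Ico_subset_Icc_self ht, rfl⟩)
    hgc (fun t ht => (hg t ht.1).hasDerivWithinAt)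
    (fun t ht => .inr ⟨t, Ico_subset_Icc_self ht, rfl⟩) ha ⟨hT, le_rfl⟩

lemma exists_hasDerivAt_of_lipschitzWith_of_norm_le {E : Type*} [NormedAddCommGroup E]
    [NormedSpace ℝ E] [CompleteSpace E] {v : E → E} {K : ℝ≥0} {M : ℝ} (hv : LipschitzWith K v)
    (hM : ∀ x, ‖v x‖ ≤ M) (x₀ : E) : ∃ γ : ℝ → E, γ 0 = x₀ ∧ ∀ t, HasDerivAt γ (v (γ t)) t := by
  have hloc (n : ℕ) : ∃ α : ℝ → E, α 0 = x₀ ∧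
      ∀ t ∈ Ioo (-(n + 1 : ℝ)) (n + 1), HasDerivAt α (v (α t)) t := by
    have hpl : IsPicardLindelof (fun _ => v) (tmin := -(n + 1 : ℝ)) (tmax := n + 1)
        ⟨0, by constructor <;> linarith⟩ x₀ (M.toNNReal * (n + 1)) 0 M.toNNReal K :=
      .of_time_independent (fun x _ => (hM x).trans (Real.le_coe_toNNReal M)) hv.lipschitzOnWith
        (by simp)
    obtain ⟨α, hα0, hα⟩ := hpl.exists_eq_forall_mem_Icc_hasDerivWithinAt₀
    exact ⟨α, hα0, fun t ht => (hα t (Ioo_subset_Icc_self ht)).hasDerivAt (Icc_mem_nhds ht.1 ht.2)⟩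
  choose α hα0 hα using hloc
  have hagree {m n : ℕ} (hmn : m ≤ n) : EqOn (α m) (α n) (Ioo (-(m + 1 : ℝ)) (m + 1)) := by
    have hmn' : (m : ℝ) ≤ n := Nat.cast_le.mpr hmn
    refine ODE_solution_unique_of_mem_Ioo (v := fun _ => v) (s := fun _ => univ) (t₀ := 0)
      (fun _ _ => hv.lipschitzOnWith) ⟨by linarith, by linarith⟩
      (fun t ht => ⟨hα m t ht, trivial⟩)
      (fun t ht => ⟨hα n t ⟨by linarith [ht.1], by linarith [ht.2]⟩, trivial⟩) ?_
    rw [hα0, hα0]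
  -- Glue the local solutions: near `t`, the glued curve is `α (N + 1)`, where `N = ⌈|t|⌉₊`.
  refine ⟨fun t => α ⌈|t|⌉₊ t, by simpa using hα0 0, fun t => ?_⟩
  set N := ⌈|t|⌉₊
  have hN : |t| ≤ N := Nat.le_ceil _
  have heq : (fun s => α ⌈|s|⌉₊ s) =ᶠ[𝓝 t] α (N + 1) := by
    filter_upwards [Ioo_mem_nhds (show -(N + 1 : ℝ) < t by linarith [neg_abs_le t])
      (show t < N + 1 by linarith [le_abs_self t])] with s hs
    have hs' : |s| < N + 1 := abs_lt.mpr hs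
    refine hagree (Nat.ceil_le.mpr (by exact_mod_cast hs'.le)) ?_
    have := Nat.le_ceil |s|
    exact abs_lt.mp (by linarith)
  have htN : t ∈ Ioo (-((N + 1 : ℕ) + 1 : ℝ)) ((N + 1 : ℕ) + 1) := by
    push_cast
    constructor <;> linarith [neg_abs_le t, le_abs_self t]
  simpa only [heq.eq_of_nhds] using (hα (N + 1) t htN).congr_of_eventuallyEq heq

namespace RoutingModel

section Fvec

variable {d C : ℕ} {lam : ℝ} {ξ ξ' : ℕ → ℝ}

lemma psum_congr {j : ℕ} (h : ∀ k < j, ξ k = ξ' k) : psum ξ j = psum ξ' j :=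
  sum_congr rfl fun k hk => h k (mem_range.mp hk)

lemma gfun_congr (h : ∀ k ≤ C, ξ k = ξ' k) {j : ℕ} (hj : j < C) :
    gfun d C ξ j = gfun d C ξ' j := by
  have hps : ∀ i ≤ C, psum ξ i = psum ξ' i := fun i hi =>
    psum_congr fun k hk => h k (hk.trans_le hi).le
  unfold gfun
  rw [h C le_rfl, h j hj.le, hps (j + 1) hj, hps j hj.le]
  congr 2
  refine sum_congr rfl fun i hi => ?_
  have hiC := (mem_Ico.mp hi).2
  rw [h i hiC.le, hps (i + 1) hiC, hps i hiC.le]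

lemma Fvec_congr (hC : 0 < C) (h : ∀ k ≤ C, ξ k = ξ' k) {k : ℕ} (hk : k ≤ C) :
    Fvec d C lam ξ k = Fvec d C lam ξ' k := by
  have hpred : k - 1 < C := by omega
  unfold Fvec
  split_ifs with h0 hkC
  · rw [h 0 (Nat.zero_le C), h 1 hC, gfun_congr h hC]
  · subst hkC
    rw [h k hk, h (k - 1) hpred.le, gfun_congr h hpred]
  · have hkC' : k < C := lt_of_le_of_ne hk hkC
    rw [h k hk, h (k - 1) hpred.le, h (k + 1) hkC', gfun_congr h hkC', gfun_congr h hpred]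

lemma gfun_eq_zero {j : ℕ} (hj : ξ j = 0) : gfun d C ξ j = 0 := by
  simp [gfun, hj]

lemma gfun_nonneg (hξ : ∀ k ≤ C, 0 ≤ ξ k) (hsum : psum ξ (C + 1) ≤ 1) {j : ℕ} (hj : j < C) :
    0 ≤ gfun d C ξ j := by
  have hpsum : ∀ i ≤ C + 1, 0 ≤ psum ξ i ∧ 0 ≤ 1 - psum ξ i ^ 2 := by
    intro i hi
    have h0 : 0 ≤ psum ξ i := sum_nonneg fun k hk => hξ k (by have := mem_range.mp hk; omega)
    have h1 : psum ξ i ≤ 1 := (sum_le_sum_of_subset_of_nonneg (range_subset_range.mpr hi)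
      fun k hk _ => hξ k (by have := mem_range.mp hk; omega)).trans hsum
    exact ⟨h0, by nlinarith⟩
  have hφ : ∀ i < C, 0 ≤ ∑ r ∈ range d,
      (1 - psum ξ (i + 1) ^ 2) ^ r * (1 - psum ξ i ^ 2) ^ (d - 1 - r) := fun i hi =>
    sum_nonneg fun r _ => mul_nonneg (pow_nonneg (hpsum (i + 1) (by omega)).2 r)
      (pow_nonneg (hpsum i (by omega)).2 _)
  have hC := hξ C le_rfl
  have hj' := hξ j hj.le
  unfold gfun
  refine add_nonneg (by have := (hpsum (j + 1) (by omega)).1; have := hφ j hj; positivity)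
    (mul_nonneg (by positivity) (sum_nonneg fun i hi => ?_))
  have hi := (mem_Ico.mp hi).2
  exact mul_nonneg (hξ i hi.le) (hφ i hi)

lemma Fvec_nonneg_of_eq_zero (hC : 0 < C) (hlam : 0 ≤ lam) (hξ : ∀ k ≤ C, 0 ≤ ξ k)
    (hsum : psum ξ (C + 1) ≤ 1) {k : ℕ} (hk : k ≤ C) (hξk : ξ k = 0) :
    0 ≤ Fvec d C lam ξ k := by
  have hpred : k - 1 < C := by omega
  have hg := gfun_nonneg (d := d) hξ hsum hpred
  unfold Fvec
  split_ifs with h0 hkC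
  · subst h0
    rw [hξk, gfun_eq_zero hξk]
    simpa using hξ 1 hC
  · subst hkC
    rw [hξk, mul_zero, sub_zero]
    have := hξ (k - 1) hpred.le
    positivity
  · rw [hξk, gfun_eq_zero hξk]
    have := hξ (k - 1) hpred.le
    have := hξ (k + 1) (by omega)
    simp only [mul_zero, sub_zero]
    positivity

/-- The net rate from level `k - 1` into level `k`; `Fvec` is its discrete divergence. -/
noncomputable def flux (d C : ℕ) (lam : ℝ) (ξ : ℕ → ℝ) (k : ℕ) : ℝ :=
  if k = 0 ∨ C < k then 0 else lam * ξ (k - 1) + lam * gfun d C ξ (k - 1) - k * ξ k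

lemma Fvec_eq_flux_sub_flux (hC : 0 < C) {k : ℕ} (hk : k ≤ C) :
    Fvec d C lam ξ k = flux d C lam ξ k - flux d C lam ξ (k + 1) := by
  rcases Nat.eq_zero_or_pos k with rfl | hk0
  · rw [Fvec, if_pos rfl, flux, if_pos (.inl rfl), flux, if_neg (by omega)]
    push_cast
    ring
  rcases hk.eq_or_lt with rfl | hkC
  · rw [Fvec, if_neg hk0.ne', if_pos rfl, flux, if_neg (by omega), flux, if_pos (.inr k.lt_succ_self),
      sub_zero]
  · rw [Fvec, if_neg hk0.ne', if_neg hkC.ne, flux, if_neg (by omega), flux, if_neg (by omega),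
      Nat.add_sub_cancel]
    push_cast
    ring

lemma sum_Fvec (hC : 0 < C) : ∑ k ∈ range (C + 1), Fvec d C lam ξ k = 0 := by
  rw [sum_congr rfl fun k hk => Fvec_eq_flux_sub_flux hC (Nat.lt_succ_iff.mp (mem_range.mp hk)),
    sum_range_sub']
  simp [flux]

end Fvec

variable {n : ℕ}

def ofFin (x : Fin n → ℝ) (k : ℕ) : ℝ := if h : k < n then x ⟨k, h⟩ else 0

lemma ofFin_of_lt (x : Fin n → ℝ) {k : ℕ} (hk : k < n) : ofFin x k = x ⟨k, hk⟩ := dif_pos hk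

@[simp] lemma ofFin_val (x : Fin n → ℝ) (i : Fin n) : ofFin x i = x i := ofFin_of_lt x i.is_lt

lemma psum_ofFin (x : Fin n → ℝ) : psum (ofFin x) n = ∑ i, x i := by
  simp [psum, ← Fin.sum_univ_eq_sum_range]

@[fun_prop]
lemma contDiff_ofFin_apply {m : WithTop ℕ∞} (k : ℕ) :
    ContDiff ℝ m fun x : Fin n → ℝ => ofFin x k := by
  unfold ofFin
  split
  · exact contDiff_apply ℝ ℝ _
  · exact contDiff_const

lemma lipschitzWith_ofFin_apply (k : ℕ) : LipschitzWith 1 fun x : Fin n → ℝ => ofFin x k := by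
  unfold ofFin
  split
  · exact LipschitzWith.eval _
  · exact LipschitzWith.const' 0

lemma lipschitzWith_psum {α : Type*} [PseudoEMetricSpace α] {f : α → ℕ → ℝ}
    (hf : ∀ k, LipschitzWith 1 fun a => f a k) (m : ℕ) :
    LipschitzWith m fun a => psum (f a) m := by
  induction m with
  | zero => simp [psum, LipschitzWith.const']
  | succ m ih => simpa [psum, sum_range_succ] using ih.add (hf m)

noncomputable def posMass (x : Fin n → ℝ) (m : ℕ) : ℝ := psum (fun k => (ofFin x k)⁺) m

lemma posMass_succ (x : Fin n → ℝ) (m : ℕ) : posMass x (m + 1) = posMass x m + (ofFin x m)⁺ :=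
  sum_range_succ _ _

lemma posMass_nonneg (x : Fin n → ℝ) (m : ℕ) : 0 ≤ posMass x m := by
  unfold posMass psum
  exact sum_nonneg fun _ _ => posPart_nonneg _

lemma monotone_posMass (x : Fin n → ℝ) : Monotone (posMass x) :=
  monotone_nat_of_le_succ fun m => by simp [posMass_succ]

lemma lipschitzWith_posMass (m : ℕ) : LipschitzWith m fun x : Fin n → ℝ => posMass x m :=
  lipschitzWith_psum (fun k => (lipschitzWith_ofFin_apply k).max_const 0) m

/-- The positive parts of the coordinates are kept, in order, until total mass `1` is used up. -/
noncomputable def truncate (x : Fin n → ℝ) (i : Fin n) : ℝ :=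
  min (posMass x (i + 1)) 1 - min (posMass x i) 1

lemma truncate_nonneg (x : Fin n → ℝ) (i : Fin n) : 0 ≤ truncate x i :=
  sub_nonneg.mpr (min_le_min_right _ (monotone_posMass x (Nat.le_succ _)))

lemma truncate_le_one (x : Fin n → ℝ) (i : Fin n) : truncate x i ≤ 1 := by
  have := le_min (posMass_nonneg x i) zero_le_one
  have := min_le_right (posMass x (i + 1)) 1
  unfold truncate
  linarith

lemma truncate_mem_Icc (x : Fin n → ℝ) : truncate x ∈ Set.Icc 0 1 :=
  ⟨truncate_nonneg x, truncate_le_one x⟩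

lemma truncate_eq_zero {x : Fin n → ℝ} {i : Fin n} (hi : x i ≤ 0) : truncate x i = 0 := by
  rw [truncate, posMass_succ, ofFin_val, posPart_eq_zero.mpr hi, add_zero, sub_self]

lemma sum_truncate_le_one (x : Fin n → ℝ) : ∑ i, truncate x i ≤ 1 := by
  unfold truncate
  rw [Fin.sum_univ_eq_sum_range (fun k => min (posMass x (k + 1)) 1 - min (posMass x k) 1),
    sum_range_sub (fun k => min (posMass x k) 1)]
  simp [posMass, psum]

lemma truncate_eq_self {x : Fin n → ℝ} (h0 : ∀ i, 0 ≤ x i) (h1 : ∑ i, x i ≤ 1) :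
    truncate x = x := by
  have hpos (m : ℕ) : posMass x m = psum (ofFin x) m := by
    unfold posMass psum
    refine sum_congr rfl fun k _ => posPart_eq_self.mpr ?_
    unfold ofFin
    split
    · exact h0 _
    · exact le_rfl
  have hle {m : ℕ} (hm : m ≤ n) : posMass x m ≤ 1 :=
    (monotone_posMass x hm).trans ((hpos n).trans_le ((psum_ofFin x).trans_le h1))
  funext i
  rw [truncate, min_eq_left (hle i.is_lt), min_eq_left (hle i.is_lt.le), hpos, hpos, psum, psum,
    sum_range_succ, add_sub_cancel_left, ofFin_val]

lemma lipschitzWith_truncate : LipschitzWith (2 * n) (truncate (n := n)) := by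
  have hcap {m : ℕ} (hm : m ≤ n) : LipschitzWith n fun x : Fin n → ℝ => min (posMass x m) 1 :=
    ((lipschitzWith_posMass m).min_const 1).weaken (by exact_mod_cast hm)
  refine LipschitzWith.of_dist_le_mul fun x y => (dist_pi_le_iff (by positivity)).mpr fun i => ?_
  have := ((hcap i.is_lt).sub (hcap i.is_lt.le)).dist_le_mul x y
  push_cast [two_mul]
  exact this

variable {d C : ℕ} {lam : ℝ}

noncomputable def routingField (d C : ℕ) (lam : ℝ) (x : Fin (C + 1) → ℝ) : Fin (C + 1) → ℝ :=
  fun i => Fvec d C lam (ofFin x) i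

lemma contDiff_routingField : ContDiff ℝ 1 (routingField d C lam) := by
  refine contDiff_pi.mpr fun i => ?_
  unfold routingField Fvec gfun psum
  split_ifs <;> fun_prop

lemma sum_routingField (hC : 0 < C) (x : Fin (C + 1) → ℝ) :
    ∑ i, routingField d C lam x i = 0 := by
  simp only [routingField]
  rw [Fin.sum_univ_eq_sum_range (fun k => Fvec d C lam (ofFin x) k)]
  exact sum_Fvec hC

lemma routingField_nonneg_of_eq_zero (hC : 0 < C) (hlam : 0 ≤ lam) {y : Fin (C + 1) → ℝ}
    (hy0 : ∀ i, 0 ≤ y i) (hy1 : ∑ i, y i ≤ 1) {i : Fin (C + 1)} (hyi : y i = 0) :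
    0 ≤ routingField d C lam y i :=
  Fvec_nonneg_of_eq_zero hC hlam (fun k hk => (ofFin_of_lt y (Nat.lt_succ_of_le hk)).symm ▸ hy0 _)
    ((psum_ofFin y).trans_le hy1) i.is_le (by rwa [ofFin_val])

lemma exists_lipschitzWith_routingField_comp_truncate :
    ∃ K, LipschitzWith K (routingField d C lam ∘ truncate) := by
  obtain ⟨K, hK⟩ := contDiff_routingField.locallyLipschitz.locallyLipschitzOn
    |>.exists_lipschitzOnWith_of_compact (isCompact_Icc (a := 0) (b := 1))
  exact ⟨_, lipschitzOnWith_univ.mp <| hK.comp lipschitzWith_truncate.lipschitzOnWith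
    fun x _ => truncate_mem_Icc x⟩

lemma exists_norm_routingField_comp_truncate_le :
    ∃ M, ∀ x, ‖(routingField d C lam ∘ truncate) x‖ ≤ M := by
  obtain ⟨M, hM⟩ := isCompact_Icc.exists_bound_of_continuousOn
    (contDiff_routingField (d := d) (C := C) (lam := lam)).continuous.continuousOn
    (s := Icc 0 1)
  exact ⟨M, fun x => hM _ (truncate_mem_Icc x)⟩

theorem exists_solution_mem_simplex (hC : 0 < C) (hlam : 0 ≤ lam) {x₀ : Fin (C + 1) → ℝ}
    (h0 : ∀ i, 0 ≤ x₀ i) (h1 : ∑ i, x₀ i = 1) :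
    ∃ γ : ℝ → Fin (C + 1) → ℝ, γ 0 = x₀ ∧ ∀ t, 0 ≤ t →
      HasDerivAt γ (routingField d C lam (γ t)) t ∧ (∀ i, 0 ≤ γ t i) ∧ ∑ i, γ t i = 1 := by
  obtain ⟨K, hK⟩ := exists_lipschitzWith_routingField_comp_truncate (d := d) (C := C) (lam := lam)
  obtain ⟨M, hM⟩ := exists_norm_routingField_comp_truncate_le (d := d) (C := C) (lam := lam)
  obtain ⟨γ, hγ0, hγ⟩ := exists_hasDerivAt_of_lipschitzWith_of_norm_le hK hM x₀
  have hcoord (i : Fin (C + 1)) (t : ℝ) :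
      HasDerivAt (fun s => γ s i) (routingField d C lam (truncate (γ t)) i) t :=
    hasDerivAt_pi.mp (hγ t) i
  have hsum (t : ℝ) : ∑ i, γ t i = 1 := by
    have hd (s : ℝ) : HasDerivAt (fun s => ∑ i, γ s i) 0 s := by
      simpa [sum_routingField hC] using HasDerivAt.fun_sum (u := univ) fun i _ => hcoord i s
    rw [is_const_of_deriv_eq_zero (fun s => (hd s).differentiableAt) (fun s => (hd s).deriv) t 0,
      hγ0, h1]
  have hnonneg (i : Fin (C + 1)) : ∀ t, 0 ≤ t → 0 ≤ γ t i :=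
    nonneg_of_hasDerivAt_nonneg_of_nonpos (hcoord i) (hγ0 ▸ h0 i) fun t ht =>
      routingField_nonneg_of_eq_zero hC hlam (truncate_nonneg _) (sum_truncate_le_one _)
        (truncate_eq_zero ht)
  refine ⟨γ, hγ0, fun t ht => ⟨?_, fun i => hnonneg i t ht, hsum t⟩⟩
  simpa [truncate_eq_self (fun i => hnonneg i t ht) (hsum t).le] using hγ t

theorem exists_Fvec_solution (hC : 0 < C) (hlam : 0 ≤ lam) {ξ₀ : ℕ → ℝ}
    (h0 : ∀ k ≤ C, 0 ≤ ξ₀ k) (h1 : ∑ k ∈ range (C + 1), ξ₀ k = 1) :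
    ∃ ξ : ℝ → ℕ → ℝ, (∀ k ≤ C, ξ 0 k = ξ₀ k) ∧
      (∀ t, 0 ≤ t → ∀ k ≤ C, HasDerivAt (fun s => ξ s k) (Fvec d C lam (ξ t) k) t) ∧
      (∀ t, 0 ≤ t → (∀ k ≤ C, 0 ≤ ξ t k) ∧ ∑ k ∈ range (C + 1), ξ t k = 1) := by
  obtain ⟨γ, hγ0, hγ⟩ := exists_solution_mem_simplex (d := d) hC hlam (x₀ := fun i => ξ₀ i)
    (fun i => h0 i i.is_le) (by rwa [Fin.sum_univ_eq_sum_range (fun k => ξ₀ k)])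
  refine ⟨fun t => ofFin (γ t), fun k hk => ?_, fun t ht k hk => ?_,
    fun t ht => ⟨fun k hk => ?_, (psum_ofFin (γ t)).trans (hγ t ht).2.2⟩⟩
  · dsimp only
    rw [ofFin_of_lt _ (Nat.lt_succ_of_le hk), hγ0]
  · simp only [ofFin_of_lt _ (Nat.lt_succ_of_le hk)]
    exact hasDerivAt_pi.mp (hγ t ht).1 _
  · dsimp only
    rw [ofFin_of_lt _ (Nat.lt_succ_of_le hk)]
    exact (hγ t ht).2.1 _

lemma hasDerivAt_routingField_of_Fvec (hC : 0 < C) {ξ : ℝ → ℕ → ℝ} {t : ℝ}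
    (h : ∀ k ≤ C, HasDerivAt (fun s => ξ s k) (Fvec d C lam (ξ t) k) t) :
    HasDerivAt (fun s (i : Fin (C + 1)) => ξ s i) (routingField d C lam fun i => ξ t i) t :=
  hasDerivAt_pi.mpr fun i => by
    rw [routingField, ← Fvec_congr hC
      (fun k hk => (ofFin_of_lt (fun i : Fin (C + 1) => ξ t i) (Nat.lt_succ_of_le hk)).symm) i.is_le]
    exact h i i.is_le

theorem Fvec_solution_unique (hC : 0 < C) {ξ η : ℝ → ℕ → ℝ}
    (hξ : ∀ t, 0 ≤ t → ∀ k ≤ C, HasDerivAt (fun s => ξ s k) (Fvec d C lam (ξ t) k) t)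
    (hη : ∀ t, 0 ≤ t → ∀ k ≤ C, HasDerivAt (fun s => η s k) (Fvec d C lam (η t) k) t)
    (h0 : ∀ k ≤ C, ξ 0 k = η 0 k) {t : ℝ} (ht : 0 ≤ t) {k : ℕ} (hk : k ≤ C) :
    ξ t k = η t k :=
  congrFun (ODE_solution_unique_Ici_of_locallyLipschitz contDiff_routingField.locallyLipschitz
    (fun t ht => hasDerivAt_routingField_of_Fvec hC (hξ t ht))
    (fun t ht => hasDerivAt_routingField_of_Fvec hC (hη t ht))
    (funext fun i => h0 i i.is_le) ht) ⟨k, Nat.lt_succ_of_le hk⟩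

end RoutingModel

theorem stmt10_general (d C : ℕ) (hC : 0 < C) (lam : ℝ) (hlam : 0 < lam)
    (ξ₀ : ℕ → ℝ) (hξ₀0 : ∀ k ≤ C, 0 ≤ ξ₀ k)
    (hξ₀1 : ∑ k ∈ Finset.range (C + 1), ξ₀ k = 1) :
    (∃ ξ : ℝ → ℕ → ℝ,
      (∀ k ≤ C, ξ 0 k = ξ₀ k) ∧
      (∀ t : ℝ, 0 ≤ t → ∀ k ≤ C,
        HasDerivAt (fun s => ξ s k) (Fvec d C lam (ξ t) k) t) ∧
      (∀ t : ℝ, 0 ≤ t →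
        (∀ k ≤ C, 0 ≤ ξ t k) ∧ ∑ k ∈ Finset.range (C + 1), ξ t k = 1)) ∧
    (∀ ξ η : ℝ → ℕ → ℝ,
      (∀ k ≤ C, ξ 0 k = ξ₀ k) →
      (∀ t : ℝ, 0 ≤ t → ∀ k ≤ C,
        HasDerivAt (fun s => ξ s k) (Fvec d C lam (ξ t) k) t) →
      (∀ k ≤ C, η 0 k = ξ₀ k) →
      (∀ t : ℝ, 0 ≤ t → ∀ k ≤ C,
        HasDerivAt (fun s => η s k) (Fvec d C lam (η t) k) t) →
      ∀ t : ℝ, 0 ≤ t → ∀ k ≤ C, ξ t k = η t k) :=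
  ⟨RoutingModel.exists_Fvec_solution hC hlam.le hξ₀0 hξ₀1,
    fun _ _ hξ0 hξ hη0 hη _ ht _ hk => RoutingModel.Fvec_solution_unique hC hξ hη
      (fun k hk => (hξ0 k hk).trans (hη0 k hk).symm) ht hk⟩

/-- For any initial condition in the probability simplex, the routing-model ODE
`dξ/dt = F(ξ)` has a solution defined for all `t ≥ 0` which stays in the simplex,
and this solution is unique (on coordinates `0,…,C`). -/
theorem stmt10 (d C : ℕ) (hd : 0 < d) (hC : 0 < C) (lam : ℝ) (hlam : 0 < lam)
    (ξ₀ : ℕ → ℝ) (hξ₀0 : ∀ k ≤ C, 0 ≤ ξ₀ k)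
    (hξ₀1 : ∑ k ∈ Finset.range (C + 1), ξ₀ k = 1) :
    (∃ ξ : ℝ → ℕ → ℝ,
      (∀ k ≤ C, ξ 0 k = ξ₀ k) ∧
      (∀ t : ℝ, 0 ≤ t → ∀ k ≤ C,
        HasDerivAt (fun s => ξ s k) (Fvec d C lam (ξ t) k) t) ∧
      (∀ t : ℝ, 0 ≤ t →
        (∀ k ≤ C, 0 ≤ ξ t k) ∧ ∑ k ∈ Finset.range (C + 1), ξ t k = 1)) ∧
    (∀ ξ η : ℝ → ℕ → ℝ,
      (∀ k ≤ C, ξ 0 k = ξ₀ k) →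
      (∀ t : ℝ, 0 ≤ t → ∀ k ≤ C,
        HasDerivAt (fun s => ξ s k) (Fvec d C lam (ξ t) k) t) →
      (∀ k ≤ C, η 0 k = ξ₀ k) →
      (∀ t : ℝ, 0 ≤ t → ∀ k ≤ C,
        HasDerivAt (fun s => η s k) (Fvec d C lam (η t) k) t) →
      ∀ t : ℝ, 0 ≤ t → ∀ k ≤ C, ξ t k = η t k) :=
  stmt10_general d C hC lam hlam ξ₀ hξ₀0 hξ₀1
end

section
/- Let (W_t)_{t≥0} be a discrete-time process on the integers adapted to a filtration, started at W_0 ≤ 0, with increments in {-1, 0, +1}, and suppose that whenever W_{t-1} ≥ 0 we have P(W_t - W_{t-1} = 1 | F_{t-1}) ≤ 1/6 and P(W_t - W_{t-1} = -1 | F_{t-1}) ≥ 1/2. Then for any positive integer a and any time horizon T, P(∃ t ≤ T : W_t ≥ a) ≤ 2T (1/3)^a. -/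
/-!
Above level `0`, `3 ^ W` is a supermartingale: a step multiplies it by
`3 ^ Δ = 1 + 2 [Δ = 1] - (2/3) [Δ = -1]`, whose conditional mean is at most `1 + 2p - 2q/3 ≤ 1`
when `3p ≤ q`. A path reaching `a` by time `T` does so at the end of an excursion that leaves `0`
at some time `t < T` (its last visit to `0`) and stays in `(0, a)` until it reaches `a`.
Stopped when that excursion ends, `3 ^ W` starts at `3 ^ 0 = 1` and keeps expectation at most `1`,
while it is at least `3 ^ a` on a crossing; so each `t` contributes at most `3 ^ (-a)`, and a union
bound over `t` gives `T 3 ^ (-a)`.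
-/

open MeasureTheory

section ConditionalDrift

variable {Ω : Type*} {m : MeasurableSpace Ω} [m0 : MeasurableSpace Ω] {μ : Measure Ω}
  [IsFiniteMeasure μ] {f g : Ω → ℝ} {C c : ℝ}

lemma integral_mul_condExp_of_bound (hm : m ≤ m0) (hg : StronglyMeasurable[m] g)
    (hgC : ∀ ω, ‖g ω‖ ≤ C) (hf : Integrable f μ) :
    ∫ ω, g ω * (μ[f|m]) ω ∂μ = ∫ ω, g ω * f ω ∂μ := by
  calc ∫ ω, g ω * (μ[f|m]) ω ∂μ = ∫ ω, (μ[g * f|m]) ω ∂μ :=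
        integral_congr_ae
          (condExp_stronglyMeasurable_mul_of_bound hm hg hf C (.of_forall hgC)).symm
    _ = ∫ ω, g ω * f ω ∂μ := integral_condExp hm

lemma integral_mul_le_of_condExp_le (hm : m ≤ m0) (hg : StronglyMeasurable[m] g)
    (hg0 : ∀ ω, 0 ≤ g ω) (hgC : ∀ ω, ‖g ω‖ ≤ C) (hf : Integrable f μ)
    (hfc : ∀ᵐ ω ∂μ, g ω ≠ 0 → (μ[f|m]) ω ≤ c) :
    ∫ ω, g ω * f ω ∂μ ≤ c * ∫ ω, g ω ∂μ := by
  have hgm := (hg.mono hm).aestronglyMeasurable (μ := μ)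
  rw [← integral_mul_condExp_of_bound hm hg hgC hf, ← integral_const_mul]
  refine integral_mono_ae (integrable_condExp.bdd_mul hgm (.of_forall hgC))
    ((Integrable.of_bound hgm C (.of_forall hgC)).const_mul c) ?_
  filter_upwards [hfc] with ω hω
  rcases eq_or_ne (g ω) 0 with h | h
  · simp [h]
  · rw [mul_comm c]
    exact mul_le_mul_of_nonneg_left (hω h) (hg0 ω)

lemma le_integral_mul_of_le_condExp (hm : m ≤ m0) (hg : StronglyMeasurable[m] g)
    (hg0 : ∀ ω, 0 ≤ g ω) (hgC : ∀ ω, ‖g ω‖ ≤ C) (hf : Integrable f μ)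
    (hfc : ∀ᵐ ω ∂μ, g ω ≠ 0 → c ≤ (μ[f|m]) ω) :
    c * ∫ ω, g ω ∂μ ≤ ∫ ω, g ω * f ω ∂μ := by
  have hgm := (hg.mono hm).aestronglyMeasurable (μ := μ)
  rw [← integral_mul_condExp_of_bound hm hg hgC hf, ← integral_const_mul]
  refine integral_mono_ae ((Integrable.of_bound hgm C (.of_forall hgC)).const_mul c)
    (integrable_condExp.bdd_mul hgm (.of_forall hgC)) ?_
  filter_upwards [hfc] with ω hω
  rcases eq_or_ne (g ω) 0 with h | h
  · simp [h]
  · rw [mul_comm c]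
    exact mul_le_mul_of_nonneg_left (hω h) (hg0 ω)

lemma integral_mul_three_zpow_sub_le {X Y : Ω → ℤ} (hm : m ≤ m0) (hX : Measurable X)
    (hY : Measurable Y) (hXY : ∀ ω, |Y ω - X ω| ≤ 1) {p q : ℝ} (hpq : 3 * p ≤ q)
    (hup : ∀ᵐ ω ∂μ, 0 ≤ X ω →
      (μ[{ω | Y ω - X ω = 1}.indicator (fun _ => (1 : ℝ))|m]) ω ≤ p)
    (hdown : ∀ᵐ ω ∂μ, 0 ≤ X ω →
      q ≤ (μ[{ω | Y ω - X ω = -1}.indicator (fun _ => (1 : ℝ))|m]) ω)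
    (hg : StronglyMeasurable[m] g) (hg0 : ∀ ω, 0 ≤ g ω) (hgC : ∀ ω, ‖g ω‖ ≤ C)
    (hgX : ∀ ω, g ω ≠ 0 → 0 ≤ X ω) :
    ∫ ω, g ω * (3 : ℝ) ^ (Y ω - X ω) ∂μ ≤ ∫ ω, g ω ∂μ := by
  set up := {ω | Y ω - X ω = 1}.indicator (fun _ => (1 : ℝ))
  set down := {ω | Y ω - X ω = -1}.indicator (fun _ => (1 : ℝ))
  have hgm := (hg.mono hm).aestronglyMeasurable (μ := μ)
  have hg_int : Integrable g μ := .of_bound hgm C (.of_forall hgC)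
  have hup_int : Integrable up μ :=
    (integrable_const 1).indicator ((hY.sub hX) (measurableSet_singleton 1))
  have hdown_int : Integrable down μ :=
    (integrable_const 1).indicator ((hY.sub hX) (measurableSet_singleton (-1)))
  have h_up : ∫ ω, g ω * up ω ∂μ ≤ p * ∫ ω, g ω ∂μ :=
    integral_mul_le_of_condExp_le hm hg hg0 hgC hup_int <| by
      filter_upwards [hup] with ω hω hgω using hω (hgX ω hgω)
  have h_down : q * ∫ ω, g ω ∂μ ≤ ∫ ω, g ω * down ω ∂μ :=
    le_integral_mul_of_le_condExp hm hg hg0 hgC hdown_int <| by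
      filter_upwards [hdown] with ω hω hgω using hω (hgX ω hgω)
  have h_split : ∫ ω, g ω * (3 : ℝ) ^ (Y ω - X ω) ∂μ
      = ∫ ω, g ω ∂μ + 2 * ∫ ω, g ω * up ω ∂μ - 2 / 3 * ∫ ω, g ω * down ω ∂μ := by
    have hgu := hup_int.bdd_mul hgm (.of_forall hgC)
    have hgd := hdown_int.bdd_mul hgm (.of_forall hgC)
    have hgu' : Integrable (fun ω => g ω + 2 * (g ω * up ω)) μ := hg_int.add (hgu.const_mul 2)
    rw [← integral_const_mul, ← integral_const_mul, ← integral_add hg_int (hgu.const_mul 2),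
      ← integral_sub hgu' (hgd.const_mul _)]
    refine integral_congr_ae (.of_forall fun ω => ?_)
    obtain h | h | h : Y ω - X ω = -1 ∨ Y ω - X ω = 0 ∨ Y ω - X ω = 1 := by
      have := abs_le.mp (hXY ω)
      omega
    all_goals simp only [up, down, Set.indicator, Set.mem_ofPred_eq, h]
    all_goals norm_num <;> ring
  have h_drift := mul_le_mul_of_nonneg_right hpq (integral_nonneg hg0 : 0 ≤ ∫ ω, g ω ∂μ)
  linarith

end ConditionalDrift

lemma exists_last_zero {w : ℕ → ℤ} (h0 : w 0 ≤ 0) (hinc : ∀ n, |w (n + 1) - w n| ≤ 1) {n : ℕ}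
    (hn : 0 < w n) : ∃ t < n, w t = 0 ∧ ∀ k, t < k → k ≤ n → 0 < w k := by
  set t := Nat.findGreatest (fun u => w u ≤ 0) n
  have ht : w t ≤ 0 := Nat.findGreatest_spec (P := fun u => w u ≤ 0) (Nat.zero_le n) h0
  have hpos : ∀ k, t < k → k ≤ n → 0 < w k := fun k htk hkn =>
    lt_of_not_ge (Nat.findGreatest_is_greatest htk hkn)
  have htn : t < n := lt_of_le_of_ne (Nat.findGreatest_le n) fun h => by rw [h] at ht; omega
  have hnext := hpos (t + 1) (by omega) htn
  have hstep := abs_le.mp (hinc t)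
  exact ⟨t, htn, by omega, hpos⟩

section Excursion

variable {Ω : Type*} (W : ℕ → Ω → ℤ) (a : ℕ)

def excursion (t s : ℕ) : Set Ω :=
  {ω | W t ω = 0 ∧ ∀ r, 0 < r → r ≤ s → 0 < W (t + r) ω ∧ W (t + r) ω < a}

def crossing (t r : ℕ) : Set Ω :=
  excursion W a t r ∩ {ω | (a : ℤ) ≤ W (t + r + 1) ω}

noncomputable def excursionWeight (t s : ℕ) : Ω → ℝ :=
  (excursion W a t s).indicator fun ω => (3 : ℝ) ^ W (t + s) ω

variable {W a}

lemma excursion_succ (t s : ℕ) :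
    excursion W a t (s + 1)
      = excursion W a t s ∩ {ω | 0 < W (t + s + 1) ω ∧ W (t + s + 1) ω < a} := by
  ext ω
  simp only [excursion, Set.mem_inter_iff, Set.mem_ofPred_eq]
  constructor
  · rintro ⟨hzero, hin⟩
    exact ⟨⟨hzero, fun r hr hrs => hin r hr (by omega)⟩, hin (s + 1) (by omega) le_rfl⟩
  · rintro ⟨⟨hzero, hin⟩, hlast⟩
    refine ⟨hzero, fun r hr hrs => ?_⟩
    obtain hrs | rfl : r ≤ s ∨ r = s + 1 := by omega
    exacts [hin r hr hrs, hlast]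

lemma mem_Icc_of_mem_excursion {t s : ℕ} {ω : Ω} (h : ω ∈ excursion W a t s) :
    W (t + s) ω ∈ Set.Icc 0 (a : ℤ) := by
  obtain ⟨hzero, hin⟩ := h
  rcases Nat.eq_zero_or_pos s with rfl | hs
  · simp [hzero]
  · have := hin s hs le_rfl
    exact ⟨by omega, by omega⟩

lemma excursionWeight_nonneg (t s : ℕ) (ω : Ω) : 0 ≤ excursionWeight W a t s ω :=
  Set.indicator_nonneg (fun _ _ => by positivity) ω

lemma norm_excursionWeight_le (t s : ℕ) (ω : Ω) :
    ‖excursionWeight W a t s ω‖ ≤ (3 : ℝ) ^ a := by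
  rw [Real.norm_of_nonneg (excursionWeight_nonneg t s ω)]
  by_cases h : ω ∈ excursion W a t s
  · rw [excursionWeight, Set.indicator_of_mem h, ← zpow_natCast]
    exact zpow_le_zpow_right₀ (by norm_num) (mem_Icc_of_mem_excursion h).2
  · rw [excursionWeight, Set.indicator_of_notMem h]
    positivity

lemma nonneg_of_excursionWeight_ne_zero {t s : ℕ} {ω : Ω} (h : excursionWeight W a t s ω ≠ 0) :
    0 ≤ W (t + s) ω :=
  (mem_Icc_of_mem_excursion (Set.mem_of_indicator_ne_zero h)).1

lemma excursionWeight_succ_add_le (t s : ℕ) (ω : Ω) :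
    excursionWeight W a t (s + 1) ω + (3 : ℝ) ^ a * (crossing W a t s).indicator 1 ω
      ≤ excursionWeight W a t s ω * (3 : ℝ) ^ (W (t + s + 1) ω - W (t + s) ω) := by
  by_cases hs : ω ∈ excursion W a t s
  · have hrhs : excursionWeight W a t s ω * (3 : ℝ) ^ (W (t + s + 1) ω - W (t + s) ω)
        = (3 : ℝ) ^ W (t + s + 1) ω := by
      rw [excursionWeight, Set.indicator_of_mem hs, ← zpow_add₀ (by norm_num), add_sub_cancel]
    rw [hrhs]
    simp only [excursionWeight, crossing, excursion_succ, Set.indicator, Set.mem_inter_iff, hs,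
      true_and, Set.mem_ofPred_eq, Pi.one_apply]
    split_ifs with hin hcross hcross
    · omega
    · simp only [mul_zero, add_zero]
      rfl
    · rw [zero_add, mul_one, ← zpow_natCast]
      exact zpow_le_zpow_right₀ (by norm_num) hcross
    · simp only [zero_add, mul_zero]
      positivity
  · have hsucc : ω ∉ excursion W a t (s + 1) := by
      rw [excursion_succ]
      exact fun h => hs h.1
    have hcross : ω ∉ crossing W a t s := fun h => hs h.1
    simp [excursionWeight, Set.indicator_of_notMem hs, Set.indicator_of_notMem hsucc,
      Set.indicator_of_notMem hcross]

lemma exists_mem_crossing {ω : Ω} (h0 : W 0 ω ≤ 0) (hinc : ∀ n, |W (n + 1) ω - W n ω| ≤ 1)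
    (ha : 0 < a) {s : ℕ} (hs : (a : ℤ) ≤ W s ω) : ∃ t r, t + r < s ∧ ω ∈ crossing W a t r := by
  have hex : ∃ n, (a : ℤ) ≤ W n ω := ⟨s, hs⟩
  set n := Nat.find hex
  have hn : (a : ℤ) ≤ W n ω := Nat.find_spec hex
  have hbelow : ∀ k < n, W k ω < a := fun k hk => lt_of_not_ge (Nat.find_min hex hk)
  obtain ⟨t, htn, hzero, hpos⟩ := exists_last_zero (w := (W · ω)) h0 hinc (n := n) (by omega)
  refine ⟨t, n - 1 - t, by have := Nat.find_min' hex hs; omega, ⟨hzero, fun r hr hrn => ?_⟩, ?_⟩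
  · exact ⟨hpos (t + r) (by omega) (by omega), hbelow (t + r) (by omega)⟩
  · show (a : ℤ) ≤ W (t + (n - 1 - t) + 1) ω
    rwa [show t + (n - 1 - t) + 1 = n by omega]

variable {m : ℕ → MeasurableSpace Ω}

lemma measurableSet_excursion (hmono : Monotone m) (hadapt : ∀ t, Measurable[m t] (W t))
    (t s : ℕ) : MeasurableSet[m (t + s)] (excursion W a t s) := by
  induction s with
  | zero =>
    have h : excursion W a t 0 = W t ⁻¹' {0} := by
      ext ω
      simp only [excursion, Set.mem_ofPred_eq, Set.mem_preimage, Set.mem_singleton_iff]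
      exact and_iff_left fun r hr hr0 => absurd hr0 (by omega)
    exact h ▸ (hadapt t) (measurableSet_singleton 0)
  | succ s ih =>
    rw [excursion_succ]
    exact (hmono (Nat.le_succ _) _ ih).inter ((hadapt (t + s + 1)) measurableSet_Ioo)

lemma stronglyMeasurable_excursionWeight (hmono : Monotone m)
    (hadapt : ∀ t, Measurable[m t] (W t)) (t s : ℕ) :
    StronglyMeasurable[m (t + s)] (excursionWeight W a t s) :=
  (Measurable.indicator (measurable_from_top.comp (hadapt (t + s)))
    (measurableSet_excursion hmono hadapt t s)).stronglyMeasurable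

variable [m0 : MeasurableSpace Ω]

structure IsBiasedAboveZero (μ : Measure Ω) (m : ℕ → MeasurableSpace Ω) (W : ℕ → Ω → ℤ)
    (p q : ℝ) : Prop where
  up : ∀ t, ∀ᵐ ω ∂μ, 0 ≤ W t ω →
    (μ[{ω' | W (t + 1) ω' - W t ω' = 1}.indicator (fun _ => (1 : ℝ))|m t]) ω ≤ p
  down : ∀ t, ∀ᵐ ω ∂μ, 0 ≤ W t ω →
    q ≤ (μ[{ω' | W (t + 1) ω' - W t ω' = -1}.indicator (fun _ => (1 : ℝ))|m t]) ω

variable {μ : Measure Ω} [IsProbabilityMeasure μ] {p q : ℝ}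

lemma integral_excursionWeight_succ_add_le (hmono : Monotone m) (hle : ∀ t, m t ≤ m0)
    (hadapt : ∀ t, Measurable[m t] (W t)) (hinc : ∀ t ω, |W (t + 1) ω - W t ω| ≤ 1)
    (hW : IsBiasedAboveZero μ m W p q) (hpq : 3 * p ≤ q) (t s : ℕ) :
    ∫ ω, excursionWeight W a t (s + 1) ω ∂μ + (3 : ℝ) ^ a * μ.real (crossing W a t s)
      ≤ ∫ ω, excursionWeight W a t s ω ∂μ := by
  have hWm : ∀ u, Measurable (W u) := fun u => (hadapt u).mono (hle u) le_rfl
  have hG := stronglyMeasurable_excursionWeight (a := a) hmono hadapt t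
  have hG_int : ∀ s, Integrable (excursionWeight W a t s) μ := fun s =>
    .of_bound ((hG s).mono (hle _)).aestronglyMeasurable _
      (.of_forall (norm_excursionWeight_le t s))
  have hcross : MeasurableSet (crossing W a t s) :=
    (hle _ _ (measurableSet_excursion hmono hadapt t s)).inter ((hWm _) measurableSet_Ici)
  have hstep_le : ∀ ω, ‖(3 : ℝ) ^ (W (t + s + 1) ω - W (t + s) ω)‖ ≤ 3 := fun ω => by
    rw [Real.norm_of_nonneg (by positivity)]
    simpa using zpow_le_zpow_right₀ (by norm_num : (1 : ℝ) ≤ 3) (abs_le.mp (hinc (t + s) ω)).2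
  have hind : Integrable ((crossing W a t s).indicator (1 : Ω → ℝ)) μ :=
    (integrable_const 1).indicator hcross
  calc ∫ ω, excursionWeight W a t (s + 1) ω ∂μ + (3 : ℝ) ^ a * μ.real (crossing W a t s)
      = ∫ ω, (excursionWeight W a t (s + 1) ω
          + (3 : ℝ) ^ a * (crossing W a t s).indicator 1 ω) ∂μ := by
        rw [integral_add (hG_int _) (hind.const_mul _), integral_const_mul,
          integral_indicator_one hcross]
    _ ≤ ∫ ω, excursionWeight W a t s ω * (3 : ℝ) ^ (W (t + s + 1) ω - W (t + s) ω) ∂μ := by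
        refine integral_mono ?_ ?_ (excursionWeight_succ_add_le t s)
        · exact (hG_int _).add (hind.const_mul _)
        · exact (hG_int s).mul_bdd (by fun_prop) (.of_forall hstep_le)
    _ ≤ ∫ ω, excursionWeight W a t s ω ∂μ :=
        integral_mul_three_zpow_sub_le (hle _) (hWm _) (hWm _) (hinc _) hpq (hW.up _) (hW.down _)
          (hG s) (excursionWeight_nonneg t s) (norm_excursionWeight_le t s)
          (fun _ => nonneg_of_excursionWeight_ne_zero)

lemma integral_excursionWeight_add_sum_le_one (hmono : Monotone m) (hle : ∀ t, m t ≤ m0)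
    (hadapt : ∀ t, Measurable[m t] (W t)) (hinc : ∀ t ω, |W (t + 1) ω - W t ω| ≤ 1)
    (hW : IsBiasedAboveZero μ m W p q) (hpq : 3 * p ≤ q) (t s : ℕ) :
    ∫ ω, excursionWeight W a t s ω ∂μ
      + (3 : ℝ) ^ a * ∑ r ∈ Finset.range s, μ.real (crossing W a t r) ≤ 1 := by
  induction s with
  | zero =>
    have hG0 : ∀ ω, excursionWeight W a t 0 ω ≤ 1 := fun ω => by
      by_cases h : ω ∈ excursion W a t 0
      · simp [excursionWeight, Set.indicator_of_mem h, h.1]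
      · simp [excursionWeight, Set.indicator_of_notMem h]
    simpa using integral_mono_of_nonneg (.of_forall (excursionWeight_nonneg t 0))
      (integrable_const (μ := μ) (1 : ℝ)) (.of_forall hG0)
  | succ s ih =>
    rw [Finset.sum_range_succ, mul_add]
    linarith [integral_excursionWeight_succ_add_le (a := a) hmono hle hadapt hinc hW hpq t s]

lemma sum_measureReal_crossing_le (hmono : Monotone m) (hle : ∀ t, m t ≤ m0)
    (hadapt : ∀ t, Measurable[m t] (W t)) (hinc : ∀ t ω, |W (t + 1) ω - W t ω| ≤ 1)
    (hW : IsBiasedAboveZero μ m W p q) (hpq : 3 * p ≤ q) (t s : ℕ) :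
    ∑ r ∈ Finset.range s, μ.real (crossing W a t r) ≤ (1 / 3 : ℝ) ^ a := by
  have h := integral_excursionWeight_add_sum_le_one (a := a) hmono hle hadapt hinc hW hpq t s
  have hG : 0 ≤ ∫ ω, excursionWeight W a t s ω ∂μ := integral_nonneg (excursionWeight_nonneg t s)
  rw [one_div_pow, le_div_iff₀ (by positivity)]
  linarith

end Excursion

/-- Biased random-walk hitting estimate: a walk with ±1 increments which, whenever
nonnegative, moves up with conditional probability at most 1/6 and down with
conditional probability at least 1/2, started at a nonpositive level, reaches
level `a` by time `T` with probability at most `2T (1/3)^a`. -/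
theorem stmt17 {Ω : Type*} [m0 : MeasurableSpace Ω]
    (μ : Measure Ω) [IsProbabilityMeasure μ]
    (m : ℕ → MeasurableSpace Ω) (hmono : Monotone m) (hle : ∀ t, m t ≤ m0)
    (W : ℕ → Ω → ℤ) (hadapt : ∀ t, Measurable[m t] (W t))
    (h0 : ∀ ω, W 0 ω ≤ 0)
    (hinc : ∀ t ω, |W (t + 1) ω - W t ω| ≤ 1)
    (hup : ∀ t : ℕ, ∀ᵐ ω ∂μ, 0 ≤ W t ω →
      (μ[Set.indicator {ω' | W (t + 1) ω' - W t ω' = 1} (fun _ => (1 : ℝ))|m t]) ω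
        ≤ 1 / 6)
    (hdown : ∀ t : ℕ, ∀ᵐ ω ∂μ, 0 ≤ W t ω →
      (1 : ℝ) / 2 ≤
        (μ[Set.indicator {ω' | W (t + 1) ω' - W t ω' = -1} (fun _ => (1 : ℝ))|m t]) ω)
    (a : ℕ) (ha : 0 < a) (T : ℕ) :
    μ {ω | ∃ t ≤ T, (a : ℤ) ≤ W t ω}
      ≤ ENNReal.ofReal (2 * (T : ℝ) * (1 / 3 : ℝ) ^ a) := by
  have hcover : {ω | ∃ t ≤ T, (a : ℤ) ≤ W t ω}
      ⊆ ⋃ t ∈ Finset.range T, ⋃ r ∈ Finset.range T, crossing W a t r := by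
    rintro ω ⟨s, hsT, hs⟩
    obtain ⟨t, r, htr, hω⟩ := exists_mem_crossing (h0 ω) (fun n => hinc n ω) ha hs
    simp only [Set.mem_iUnion, Finset.mem_range]
    exact ⟨t, by omega, r, by omega, hω⟩
  have hW : IsBiasedAboveZero μ m W (1 / 6) (1 / 2) := ⟨hup, hdown⟩
  rw [ENNReal.le_ofReal_iff_toReal_le (measure_ne_top _ _) (by positivity)]
  calc μ.real {ω | ∃ t ≤ T, (a : ℤ) ≤ W t ω}
      ≤ ∑ t ∈ Finset.range T, ∑ r ∈ Finset.range T, μ.real (crossing W a t r) :=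
        (measureReal_mono hcover (measure_ne_top _ _)).trans <|
          (measureReal_biUnion_finset_le _ _).trans <|
            Finset.sum_le_sum fun t _ => measureReal_biUnion_finset_le _ _
    _ ≤ ∑ t ∈ Finset.range T, (1 / 3 : ℝ) ^ a := Finset.sum_le_sum fun t _ =>
        sum_measureReal_crossing_le hmono hle hadapt hinc hW (by norm_num) t T
    _ ≤ 2 * T * (1 / 3 : ℝ) ^ a := by
        rw [Finset.sum_const, Finset.card_range, nsmul_eq_mul]
        gcongr
        linarith
end
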